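/- arXiv:1301.5863 — 6 statements merged into one kernel-verified Lean document; each statement's English description precedes it below -/
import Mathlib

section
/- For λ = (λ_1,…,λ_n) ∈ ℝ^n with all λ_i > 0, and any (ξ_1,…,ξ_n) ∈ ℂ^n, and any integer 2 ≤ α ≤ n, one has ∑_{i=1}^n (S_{α-1;i}(λ)/λ_i)|ξ_i|² + ∑_{i,j} S_{α-2;ij}(λ) ξ_i \bar{ξ_j} ≥ (1/S_α(λ)) |∑_i S_{α-1;i}(λ) ξ_i|² ≥ 0, where S_k denotes the k-th elementary symmetric polynomial, S_{k;i}(λ) = S_k(λ with λ_i set to 0) and S_{k;ij}(λ) = S_k(λ with λ_i, λ_j set to 0). -/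
open Finset

/-- The `k`-th elementary symmetric polynomial of `μ ∈ ℝⁿ`. -/
noncomputable def esym (n k : ℕ) (μ : Fin n → ℝ) : ℝ :=
  ∑ T ∈ (univ : Finset (Fin n)).powersetCard k, ∏ i ∈ T, μ i


lemma prod_update_of_not_mem {n : ℕ} (μ : Fin n → ℝ) (i : Fin n) (T : Finset (Fin n))
    (h : i ∉ T) : ∏ t ∈ T, Function.update μ i 0 t = ∏ t ∈ T, μ t :=
  Finset.prod_congr rfl fun t ht => Function.update_of_ne (by rintro rfl; exact h ht) _ _

lemma esym_update_one (n k : ℕ) (μ : Fin n → ℝ) (i : Fin n) :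
    esym n k (Function.update μ i 0)
      = ∑ T ∈ (univ.powersetCard k).filter (fun T => i ∉ T), ∏ t ∈ T, μ t := by
  rw [esym, ← Finset.sum_filter_add_sum_filter_not ((univ : Finset (Fin n)).powersetCard k)
    (fun T => i ∉ T)]
  have h2 : ∑ T ∈ ((univ : Finset (Fin n)).powersetCard k).filter (fun T => ¬ i ∉ T),
      ∏ t ∈ T, Function.update μ i 0 t = 0 := by
    refine Finset.sum_eq_zero fun T hT => ?_
    have : i ∈ T := by simpa using (Finset.mem_filter.1 hT).2
    exact Finset.prod_eq_zero this (Function.update_self _ _ _)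
  rw [h2, add_zero]
  exact Finset.sum_congr rfl fun T hT =>
    prod_update_of_not_mem μ i T (Finset.mem_filter.1 hT).2

lemma esym_update_two (n k : ℕ) (μ : Fin n → ℝ) (i j : Fin n) :
    esym n k (Function.update (Function.update μ i 0) j 0)
      = ∑ T ∈ (univ.powersetCard k).filter (fun T => i ∉ T ∧ j ∉ T), ∏ t ∈ T, μ t := by
  rw [esym_update_one]
  rw [← Finset.sum_filter_add_sum_filter_not
    (((univ : Finset (Fin n)).powersetCard k).filter (fun T => j ∉ T)) (fun T => i ∉ T)]
  have h2 : ∑ T ∈ (((univ : Finset (Fin n)).powersetCard k).filter (fun T => j ∉ T)).filter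
      (fun T => ¬ i ∉ T), ∏ t ∈ T, Function.update μ i 0 t = 0 := by
    refine Finset.sum_eq_zero fun T hT => ?_
    have : i ∈ T := by simpa using (Finset.mem_filter.1 hT).2
    exact Finset.prod_eq_zero this (Function.update_self _ _ _)
  rw [h2, add_zero, Finset.filter_filter]
  have hfe : ((univ : Finset (Fin n)).powersetCard k).filter (fun a => j ∉ a ∧ i ∉ a)
      = ((univ : Finset (Fin n)).powersetCard k).filter (fun T => i ∉ T ∧ j ∉ T) := by
    ext T; simp [and_comm]
  rw [hfe]
  exact Finset.sum_congr rfl fun T hT =>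
    prod_update_of_not_mem μ i T (Finset.mem_filter.1 hT).2.1

lemma sumA (n k : ℕ) (μ : Fin n → ℝ) (i : Fin n) :
    ∑ T ∈ (univ.powersetCard (k+1)).filter (fun T => i ∈ T), ∏ t ∈ T, μ t
      = μ i * esym n k (Function.update μ i 0) := by
  rw [esym_update_one, Finset.mul_sum]
  refine Finset.sum_nbij' (fun T => T.erase i) (fun S => insert i S) ?_ ?_ ?_ ?_ ?_
  · intro T hT
    obtain ⟨hT1, hT2⟩ := Finset.mem_filter.1 hT
    rw [Finset.mem_powersetCard_univ] at hT1
    simp [Finset.mem_filter, Finset.mem_powersetCard_univ, Finset.card_erase_of_mem hT2, hT1]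
  · intro S hS
    obtain ⟨hS1, hS2⟩ := Finset.mem_filter.1 hS
    rw [Finset.mem_powersetCard_univ] at hS1
    simp [Finset.mem_filter, Finset.mem_powersetCard_univ, Finset.card_insert_of_notMem hS2, hS1]
  · intro T hT
    exact Finset.insert_erase (Finset.mem_filter.1 hT).2
  · intro S hS
    exact Finset.erase_insert (Finset.mem_filter.1 hS).2
  · intro T hT
    exact (Finset.mul_prod_erase T μ (Finset.mem_filter.1 hT).2).symm

lemma sumB (n k : ℕ) (μ : Fin n → ℝ) (i j : Fin n) (hij : i ≠ j) :
    ∑ T ∈ (univ.powersetCard (k+2)).filter (fun T => i ∈ T ∧ j ∈ T), ∏ t ∈ T, μ t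
      = μ i * μ j * esym n k (Function.update (Function.update μ i 0) j 0) := by
  rw [esym_update_two, Finset.mul_sum]
  refine Finset.sum_nbij' (fun T => (T.erase i).erase j) (fun S => insert i (insert j S))
    ?_ ?_ ?_ ?_ ?_
  · intro T hT
    have h := Finset.mem_filter.1 hT
    have hT1 := Finset.mem_powersetCard_univ.1 h.1
    have hTi := h.2.1; have hTj := h.2.2
    have hj' : j ∈ T.erase i := Finset.mem_erase.2 ⟨fun h => hij h.symm, hTj⟩
    simp only [Finset.mem_filter, Finset.mem_powersetCard_univ]
    refine ⟨?_, ?_, ?_⟩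
    · rw [Finset.card_erase_of_mem hj', Finset.card_erase_of_mem hTi, hT1]; omega
    · simp [Finset.mem_erase]
    · simp [Finset.mem_erase]
  · intro S hS
    have h := Finset.mem_filter.1 hS
    have hS1 := Finset.mem_powersetCard_univ.1 h.1
    have hSi := h.2.1; have hSj := h.2.2
    simp only [Finset.mem_filter, Finset.mem_powersetCard_univ]
    refine ⟨?_, by simp, by simp [hij.symm]⟩
    rw [Finset.card_insert_of_notMem (by simp [hSi, hij]),
      Finset.card_insert_of_notMem hSj, hS1]
  · intro T hT
    have h := Finset.mem_filter.1 hT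
    show insert i (insert j ((T.erase i).erase j)) = T
    rw [Finset.insert_erase (Finset.mem_erase.2 ⟨fun h' => hij h'.symm, h.2.2⟩),
      Finset.insert_erase h.2.1]
  · intro S hS
    have h := Finset.mem_filter.1 hS
    show ((insert i (insert j S)).erase i).erase j = S
    rw [Finset.erase_insert (by simp [hij, h.2.1]), Finset.erase_insert h.2.2]
  · intro T hT
    have h := Finset.mem_filter.1 hT
    rw [← Finset.mul_prod_erase T μ h.2.1, mul_assoc, ← Finset.mul_prod_erase _ μ
      (Finset.mem_erase.2 ⟨fun h' => hij h'.symm, h.2.2⟩)]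

lemma esym_nonneg (n k : ℕ) (μ : Fin n → ℝ) (h : ∀ i, 0 ≤ μ i) : 0 ≤ esym n k μ :=
  Finset.sum_nonneg fun _ _ => Finset.prod_nonneg fun t _ => h t

lemma esym_pos (n k : ℕ) (hk : k ≤ n) (μ : Fin n → ℝ) (h : ∀ i, 0 < μ i) : 0 < esym n k μ := by
  obtain ⟨B, -, hB⟩ := Finset.exists_subset_card_eq
    (show k ≤ (univ : Finset (Fin n)).card by simpa using hk)
  refine Finset.sum_pos' (fun T _ => Finset.prod_nonneg fun t _ => (h t).le) ⟨B, ?_, ?_⟩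
  · simpa [Finset.mem_powersetCard_univ] using hB
  · exact Finset.prod_pos fun t _ => h t

theorem stmt0 (n α : ℕ) (hα : 2 ≤ α) (hαn : α ≤ n)
    (lam : Fin n → ℝ) (hlam : ∀ i, 0 < lam i) (ξ : Fin n → ℂ) :
    (1 / esym n α lam) *
        Complex.normSq (∑ i, (esym n (α-1) (Function.update lam i 0) : ℂ) * ξ i) ≥ 0 ∧
    ∑ i, esym n (α-1) (Function.update lam i 0) / lam i * Complex.normSq (ξ i)
      + (∑ i, ∑ j,
          (esym n (α-2) (Function.update (Function.update lam i 0) j 0) : ℂ)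
            * (ξ i * star (ξ j))).re
      ≥ (1 / esym n α lam) *
          Complex.normSq (∑ i, (esym n (α-1) (Function.update lam i 0) : ℂ) * ξ i) := by
  obtain ⟨β, rfl⟩ : ∃ β, α = β + 2 := ⟨α - 2, by omega⟩
  have h1 : β + 2 - 1 = β + 1 := by omega
  have h2 : β + 2 - 2 = β := by omega
  rw [h1, h2]
  set P := (univ : Finset (Fin n)).powersetCard (β + 2) with hP
  set w : Finset (Fin n) → ℝ := fun T => ∏ t ∈ T, lam t with hw
  set ν : Fin n → ℂ := fun i => ξ i / (lam i : ℝ) with hν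
  set u : Finset (Fin n) → ℂ := fun T => ∑ i ∈ T, ν i with hu
  set S : ℝ := esym n (β + 2) lam with hS
  set Q : ℝ := ∑ T ∈ P, w T * Complex.normSq (u T) with hQ
  have hSpos : 0 < S := esym_pos n (β+2) hαn lam hlam
  have hmem : ∀ (T : Finset (Fin n)) (g : Fin n → ℂ),
      ∑ i ∈ T, g i = ∑ i, (if i ∈ T then g i else 0) := by
    intro T g
    rw [Finset.sum_ite_mem, Finset.univ_inter]
  have hC1 : (∑ i, (esym n (β+1) (Function.update lam i 0) : ℂ) * ξ i)
      = ∑ T ∈ P, (w T : ℂ) * u T := by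
    have step1 : ∑ T ∈ P, (w T : ℂ) * u T
        = ∑ T ∈ P, ∑ i, (if i ∈ T then (w T : ℂ) * ν i else 0) := by
      refine Finset.sum_congr rfl fun T _ => ?_
      rw [show u T = ∑ i ∈ T, ν i from rfl, Finset.mul_sum, hmem T (fun i => (w T : ℂ) * ν i)]
    rw [step1, Finset.sum_comm]
    refine Finset.sum_congr rfl fun i _ => ?_
    have step2 : ∑ T ∈ P, (if i ∈ T then (w T : ℂ) * ν i else 0)
        = ((∑ T ∈ P, (if i ∈ T then w T else 0) : ℝ) : ℂ) * ν i := by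
      rw [Complex.ofReal_sum, Finset.sum_mul]
      refine Finset.sum_congr rfl fun T _ => ?_
      rw [apply_ite (Complex.ofReal), Complex.ofReal_zero, ite_mul, zero_mul]
    rw [step2, ← Finset.sum_filter, sumA n (β+1) lam i]
    rw [show ν i = ξ i / (lam i : ℝ) from rfl]
    push_cast
    field_simp
    rw [eq_div_iff (show ((lam i : ℝ) : ℂ) ≠ 0 by exact_mod_cast (hlam i).ne')]
  -- the off-diagonal real entries
  set off : Fin n → Fin n → ℝ := fun i j =>
    ((esym n β (Function.update (Function.update lam i 0) j 0) : ℂ)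
      * (ξ i * (starRingEnd ℂ) (ξ j))).re with hoff
  have hQeq : Q = ∑ i, ∑ j, (if i = j
      then esym n (β+1) (Function.update lam i 0) / lam i * Complex.normSq (ξ i)
      else off i j) := by
    have hext : ∀ (T : Finset (Fin n)) (f : Fin n → Fin n → ℂ),
        ∑ i ∈ T, ∑ j ∈ T, f i j = ∑ i, ∑ j, (if i ∈ T ∧ j ∈ T then f i j else 0) := by
      intro T f
      rw [hmem T]
      refine Finset.sum_congr rfl fun i _ => ?_
      by_cases h : i ∈ T
      · rw [if_pos h, hmem T]
        exact Finset.sum_congr rfl fun j _ => by by_cases hj : j ∈ T <;> simp [h, hj]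
      · rw [if_neg h]
        exact (Finset.sum_eq_zero fun j _ => by simp [h]).symm
    have hco : ∀ i j : Fin n, (∑ T ∈ P, (if i ∈ T ∧ j ∈ T then w T else 0))
        = if i = j then lam i * esym n (β+1) (Function.update lam i 0)
          else lam i * lam j * esym n β (Function.update (Function.update lam i 0) j 0) := by
      intro i j
      rw [← Finset.sum_filter]
      rcases eq_or_ne i j with rfl | hij
      · rw [if_pos rfl]
        have he : P.filter (fun T => i ∈ T ∧ i ∈ T) = P.filter (fun T => i ∈ T) := by
          ext T; simp
        rw [he]
        exact sumA n (β+1) lam i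
      · rw [if_neg hij]
        exact sumB n β lam i j hij
    have key : ((Q : ℝ) : ℂ) = ∑ i, ∑ j, (if i = j
        then ((esym n (β+1) (Function.update lam i 0) / lam i * Complex.normSq (ξ i) : ℝ) : ℂ)
        else (esym n β (Function.update (Function.update lam i 0) j 0) : ℂ)
          * (ξ i * (starRingEnd ℂ) (ξ j))) := by
      calc ((Q:ℝ):ℂ) = ∑ T ∈ P, (w T : ℂ) * (u T * (starRingEnd ℂ) (u T)) := by
            rw [hQ]; push_cast
            refine Finset.sum_congr rfl fun T _ => ?_
            rw [Complex.mul_conj]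
        _ = ∑ T ∈ P, ∑ i, ∑ j,
              (if i ∈ T ∧ j ∈ T then (w T:ℂ) * (ν i * (starRingEnd ℂ) (ν j)) else 0) := by
            refine Finset.sum_congr rfl fun T _ => ?_
            have hexp : (w T:ℂ) * (u T * (starRingEnd ℂ) (u T))
                = ∑ i ∈ T, ∑ j ∈ T, (w T:ℂ) * (ν i * (starRingEnd ℂ) (ν j)) := by
              rw [show u T = ∑ i ∈ T, ν i from rfl, map_sum, Finset.sum_mul_sum,
                Finset.mul_sum]
              exact Finset.sum_congr rfl fun i _ => by rw [Finset.mul_sum]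
            rw [hexp, hext T]
        _ = ∑ i, ∑ j, (∑ T ∈ P, (if i ∈ T ∧ j ∈ T then (w T : ℂ) else 0))
              * (ν i * (starRingEnd ℂ) (ν j)) := by
            rw [Finset.sum_comm]
            refine Finset.sum_congr rfl fun i _ => ?_
            rw [Finset.sum_comm]
            refine Finset.sum_congr rfl fun j _ => ?_
            rw [Finset.sum_mul]
            exact Finset.sum_congr rfl fun T _ => by rw [ite_mul, zero_mul]
        _ = _ := by
            refine Finset.sum_congr rfl fun i _ => Finset.sum_congr rfl fun j _ => ?_
            have hc : (∑ T ∈ P, (if i ∈ T ∧ j ∈ T then (w T:ℂ) else 0))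
                = ((∑ T ∈ P, (if i ∈ T ∧ j ∈ T then w T else 0) : ℝ) : ℂ) := by
              rw [Complex.ofReal_sum]
              refine Finset.sum_congr rfl fun T _ => ?_
              rw [apply_ite (Complex.ofReal), Complex.ofReal_zero]
            rw [hc, hco i j]
            have hli : ((lam i : ℝ) : ℂ) ≠ 0 := by exact_mod_cast (hlam i).ne'
            have hlj : ((lam j : ℝ) : ℂ) ≠ 0 := by exact_mod_cast (hlam j).ne'
            rcases eq_or_ne i j with rfl | hij
            · rw [if_pos rfl, if_pos rfl]
              rw [show ν i = ξ i / ((lam i : ℝ) : ℂ) from rfl, map_div₀, Complex.conj_ofReal,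
                div_mul_div_comm, Complex.mul_conj]
              push_cast
              field_simp
            · rw [if_neg hij, if_neg hij]
              rw [show ν i = ξ i / ((lam i : ℝ):ℂ) from rfl,
                show ν j = ξ j / ((lam j : ℝ):ℂ) from rfl, map_div₀, Complex.conj_ofReal]
              push_cast
              field_simp
    rw [show Q = ((Q:ℝ):ℂ).re from (Complex.ofReal_re Q).symm, key, Complex.re_sum]
    refine Finset.sum_congr rfl fun i _ => ?_
    rw [Complex.re_sum]
    refine Finset.sum_congr rfl fun j _ => ?_
    rcases eq_or_ne i j with rfl | hij
    · rw [if_pos rfl, if_pos rfl, Complex.ofReal_re]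
    · rw [if_neg hij, if_neg hij]
  have hYeq : (∑ i, ∑ j, (esym n β (Function.update (Function.update lam i 0) j 0) : ℂ)
        * (ξ i * star (ξ j))).re
      = ∑ i, ∑ j, (if i = j
          then esym n β (Function.update lam i 0) * Complex.normSq (ξ i)
          else off i j) := by
    rw [Complex.re_sum]
    refine Finset.sum_congr rfl fun i _ => ?_
    rw [Complex.re_sum]
    refine Finset.sum_congr rfl fun j _ => ?_
    rcases eq_or_ne i j with rfl | hij
    · rw [if_pos rfl, Function.update_idem]
      rw [show star (ξ i) = (starRingEnd ℂ) (ξ i) from rfl, Complex.mul_conj,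
        ← Complex.ofReal_mul, Complex.ofReal_re]
    · rw [if_neg hij]; rfl
  have hsplit : ∀ (a : Fin n → ℝ), (∑ i, ∑ j, (if i = j then a i else off i j))
      = ∑ i, a i + ∑ i, ∑ j, (if i = j then 0 else off i j) := by
    intro a
    rw [← Finset.sum_add_distrib]
    refine Finset.sum_congr rfl fun i _ => ?_
    have : ∀ j : Fin n, (if i = j then a i else off i j)
        = (if i = j then a j else 0) + (if i = j then 0 else off i j) := by
      intro j; split <;> simp_all
    rw [Finset.sum_congr rfl fun j _ => this j, Finset.sum_add_distrib,
      Finset.sum_ite_eq univ i a, if_pos (Finset.mem_univ i)]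
  have hwn : ∀ T, (0:ℝ) ≤ w T := fun T => Finset.prod_nonneg fun t _ => (hlam t).le
  have hCS : Complex.normSq (∑ T ∈ P, (w T : ℂ) * u T) ≤ S * Q := by
    have h1 : ‖∑ T ∈ P, (w T : ℂ) * u T‖ ≤ ∑ T ∈ P, w T * ‖u T‖ := by
      refine (norm_sum_le _ _).trans (le_of_eq (Finset.sum_congr rfl fun T hT => ?_))
      rw [norm_mul, Complex.norm_real, Real.norm_of_nonneg (hwn T)]
    have h2 : (∑ T ∈ P, w T * ‖u T‖)^2 ≤ (∑ T ∈ P, w T) * (∑ T ∈ P, w T * ‖u T‖^2) := by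
      have h3 := Finset.sum_mul_sq_le_sq_mul_sq P (fun T => Real.sqrt (w T))
        (fun T => Real.sqrt (w T) * ‖u T‖)
      have e1 : ∑ T ∈ P, Real.sqrt (w T) * (Real.sqrt (w T) * ‖u T‖)
          = ∑ T ∈ P, w T * ‖u T‖ := by
        refine Finset.sum_congr rfl fun T _ => ?_
        rw [← mul_assoc, Real.mul_self_sqrt (hwn T)]
      have e2 : ∑ T ∈ P, (Real.sqrt (w T))^2 = ∑ T ∈ P, w T := by
        refine Finset.sum_congr rfl fun T _ => Real.sq_sqrt (hwn T)
      have e3 : ∑ T ∈ P, (Real.sqrt (w T) * ‖u T‖)^2 = ∑ T ∈ P, w T * ‖u T‖^2 := by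
        refine Finset.sum_congr rfl fun T _ => ?_
        rw [mul_pow, Real.sq_sqrt (hwn T)]
      rw [e1, e2, e3] at h3
      exact h3
    have hSsum : S = ∑ T ∈ P, w T := rfl
    have hQsum : Q = ∑ T ∈ P, w T * ‖u T‖^2 := by
      rw [hQ]
      refine Finset.sum_congr rfl fun T _ => ?_
      rw [Complex.normSq_eq_norm_sq]
    rw [Complex.normSq_eq_norm_sq, hSsum, hQsum]
    calc ‖∑ T ∈ P, (w T : ℂ) * u T‖^2 ≤ (∑ T ∈ P, w T * ‖u T‖)^2 := by
          exact pow_le_pow_left₀ (norm_nonneg _) h1 2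
      _ ≤ (∑ T ∈ P, w T) * (∑ T ∈ P, w T * ‖u T‖^2) := h2
  have hD : 0 ≤ ∑ i, esym n β (Function.update lam i 0) * Complex.normSq (ξ i) := by
    refine Finset.sum_nonneg fun i _ => mul_nonneg (esym_nonneg n β _ fun t => ?_)
      (Complex.normSq_nonneg _)
    rw [Function.update_apply]
    split
    · exact le_rfl
    · exact (hlam t).le
  -- assemble
  rw [hC1]
  constructor
  · exact mul_nonneg (one_div_nonneg.2 hSpos.le) (Complex.normSq_nonneg _)
  · have hRQ : 1 / S * Complex.normSq (∑ T ∈ P, (w T : ℂ) * u T) ≤ Q := by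
      rw [div_mul_eq_mul_div, one_mul, div_le_iff₀ hSpos, mul_comm Q S]
      exact hCS
    have hs1 : Q = ∑ i, esym n (β+1) (Function.update lam i 0) / lam i * Complex.normSq (ξ i)
        + ∑ i, ∑ j, (if i = j then 0 else off i j) := by
      rw [hQeq]; exact hsplit _
    have hs2 : (∑ i, ∑ j, (esym n β (Function.update (Function.update lam i 0) j 0) : ℂ)
            * (ξ i * star (ξ j))).re
        = (∑ i, esym n β (Function.update lam i 0) * Complex.normSq (ξ i))
          + ∑ i, ∑ j, (if i = j then 0 else off i j) := by
      rw [hYeq]; exact hsplit _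
    rw [hs2]
    linarith
end

section
/- Let A be an n×n positive definite Hermitian matrix in block form A = [[B, C],[C*, a]] with B the leading (n-1)×(n-1) principal submatrix. Let J ⊆ {1,…,n-1} and let A_J = [[B_J, C_J],[C_J*, a]] be the principal submatrix of A obtained by keeping rows and columns indexed by J ∪ {n}, where B_J is the corresponding principal submatrix of B and C_J the corresponding subvector of C. Then det A_J ≥ (a − C* B^{-1} C) · det B_J. -/
open Matrix ComplexOrder

lemma sum_vanish_comp {m n : Type*} [Fintype m] [Fintype n] [DecidableEq n]
    (e : m → n) (he : Function.Injective e) (G : n → ℂ)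
    (hG : ∀ i, (∀ j, e j ≠ i) → G i = 0) : ∑ i, G i = ∑ j, G (e j) := by
  rw [← Finset.sum_image (f := G) (g := e) (fun a _ b _ h => he h)]
  symm
  apply Finset.sum_subset (Finset.subset_univ _)
  intro i _ hi
  refine hG i fun j hj => ?_
  exact hi (Finset.mem_image.2 ⟨j, Finset.mem_univ _, hj⟩)

lemma posdef_submatrix_inj {m n : Type*} [Fintype m] [Fintype n] [DecidableEq m] [DecidableEq n]
    {M : Matrix n n ℂ} (hM : M.PosDef) (e : m → n) (he : Function.Injective e) :
    (M.submatrix e e).PosDef := by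
  refine PosDef.of_dotProduct_mulVec_pos (hM.1.submatrix e) fun x hx => ?_
  set x' : n → ℂ := Function.extend e x 0 with hx'def
  have hext : ∀ j, x' (e j) = x j := fun j => he.extend_apply x 0 j
  have hzero : ∀ i, (∀ j, e j ≠ i) → x' i = 0 := by
    intro i h
    rw [hx'def, Function.extend_apply' _ _ _ (by rintro ⟨j, rfl⟩; exact h j rfl)]
    rfl
  have hx'ne : x' ≠ 0 := by
    obtain ⟨j, hj⟩ := Function.ne_iff.mp hx
    exact Function.ne_iff.mpr ⟨e j, by simpa [hext j] using hj⟩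
  have key : star x' ⬝ᵥ M *ᵥ x' = star x ⬝ᵥ (M.submatrix e e) *ᵥ x := by
    simp only [dotProduct, mulVec, Pi.star_apply, dotProduct]
    rw [sum_vanish_comp e he _ (fun i hi => by simp [hzero i hi])]
    refine Finset.sum_congr rfl fun j _ => ?_
    rw [sum_vanish_comp e he _ (fun i hi => by simp [hzero i hi])]
    simp [hext]
  have := hM.dotProduct_mulVec_pos hx'ne
  rwa [key] at this

theorem stmt2 (n : ℕ) (A : Matrix (Fin (n+1)) (Fin (n+1)) ℂ) (hA : A.PosDef)
    (J : Finset (Fin n)) :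
    let B := A.submatrix Fin.castSucc Fin.castSucc
    let C := fun i : Fin n => A (Fin.castSucc i) (Fin.last n)
    let a := A (Fin.last n) (Fin.last n)
    let BJ : Matrix J J ℂ := fun i j => B i.1 j.1
    let CJ : J → ℂ := fun i => C i.1
    let AJ : Matrix (J ⊕ Unit) (J ⊕ Unit) ℂ :=
      Matrix.fromBlocks BJ (Matrix.of fun i _ => CJ i)
        (Matrix.of fun _ j => star (CJ j)) (Matrix.of fun _ _ => a)
    AJ.det.re ≥ (a - star C ⬝ᵥ B⁻¹ *ᵥ C).re * BJ.det.re := by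
  intro B C a BJ CJ AJ
  -- positive definiteness facts
  have hB : B.PosDef := posdef_submatrix_inj hA Fin.castSucc (Fin.castSucc_injective n)
  have hBJe : BJ = B.submatrix (fun i : J => i.1) (fun i : J => i.1) := rfl
  have hBJ : BJ.PosDef := by
    rw [hBJe]; exact posdef_submatrix_inj hB _ Subtype.val_injective
  haveI : Invertible BJ := hBJ.isUnit.invertible
  -- Schur determinant formula for AJ
  set sJ : ℂ := star CJ ⬝ᵥ BJ⁻¹ *ᵥ CJ with hsJ
  have hdet : AJ.det = BJ.det * (a - sJ) := by
    rw [show AJ = Matrix.fromBlocks BJ (Matrix.of fun i _ => CJ i)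
      (Matrix.of fun _ j => star (CJ j)) (Matrix.of fun _ _ => a) from rfl,
      Matrix.det_fromBlocks₁₁]
    congr 1
    rw [det_unique, invOf_eq_nonsing_inv]
    simp only [Matrix.sub_apply, of_apply, Matrix.mul_apply, hsJ, dotProduct, mulVec, dotProduct, Pi.star_apply,
      Finset.sum_mul, Finset.mul_sum]
    congr 1
    rw [Finset.sum_comm]
    exact Finset.sum_congr rfl fun l _ => Finset.sum_congr rfl fun j _ => by ring
  -- key vectors
  set s : ℂ := star C ⬝ᵥ B⁻¹ *ᵥ C with hs
  set z : Fin n → ℂ := B⁻¹ *ᵥ C with hz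
  set y : J → ℂ := BJ⁻¹ *ᵥ CJ with hy
  have heinj : Function.Injective (fun i : J => i.1) := Subtype.val_injective
  set x' : Fin n → ℂ := Function.extend (fun i : J => i.1) y 0 with hx'
  have hext : ∀ j : J, x' j.1 = y j := fun j => heinj.extend_apply y 0 j
  have hzero : ∀ i, (∀ j : J, j.1 ≠ i) → x' i = 0 := by
    intro i h
    rw [hx', Function.extend_apply' _ _ _ (by rintro ⟨j, rfl⟩; exact h j rfl)]
    rfl
  -- dot products with extended vectors reduce to sums over J
  have hdot : ∀ u : Fin n → ℂ, x' ⬝ᵥ u = y ⬝ᵥ fun j : J => u j.1 := by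
    intro u
    simp only [dotProduct]
    rw [sum_vanish_comp (fun i : J => i.1) heinj _
      (fun i hi => by rw [hzero i hi, zero_mul])]
    exact Finset.sum_congr rfl fun j _ => by rw [hext]
  have hstarx' : star x' = Function.extend (fun i : J => i.1) (star y) 0 := by
    funext i
    by_cases h : ∃ j : J, j.1 = i
    · obtain ⟨j, rfl⟩ := h
      rw [Pi.star_apply, hext, heinj.extend_apply]
      rfl
    · push_neg at h
      rw [Pi.star_apply, hzero i h, Function.extend_apply' _ _ _ (by rintro ⟨j, rfl⟩; exact h j rfl)]
      simp
  have hdot' : ∀ u : Fin n → ℂ, star x' ⬝ᵥ u = star y ⬝ᵥ fun j : J => u j.1 := by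
    intro u
    rw [hstarx']
    simp only [dotProduct]
    rw [sum_vanish_comp (fun i : J => i.1) heinj _ (fun i hi => by
      rw [Function.extend_apply' _ _ _ (by rintro ⟨j, rfl⟩; exact hi j rfl)]
      simp)]
    exact Finset.sum_congr rfl fun j _ => by rw [heinj.extend_apply]
  -- basic identities
  have hBz : B *ᵥ z = C := by
    rw [hz, mulVec_mulVec, mul_nonsing_inv _ hB.det_pos.ne'.isUnit, one_mulVec]
  have hBJy : BJ *ᵥ y = CJ := by
    rw [hy, mulVec_mulVec, mul_nonsing_inv _ hBJ.det_pos.ne'.isUnit, one_mulVec]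
  have hBx' : ∀ j : J, (B *ᵥ x') j.1 = CJ j := by
    intro j
    have h1 : (B *ᵥ x') j.1 = x' ⬝ᵥ fun k => B j.1 k := by
      rw [dotProduct_comm]; rfl
    rw [h1, hdot]
    have : (y ⬝ᵥ fun l : J => B j.1 l.1) = (BJ *ᵥ y) j := by
      rw [dotProduct_comm]; rfl
    rw [this, hBJy]
  -- the four terms
  have hT1 : star x' ⬝ᵥ B *ᵥ x' = star y ⬝ᵥ CJ := by
    rw [hdot']
    exact congrArg _ (funext fun j => hBx' j)
  have hT2 : star x' ⬝ᵥ B *ᵥ z = star y ⬝ᵥ CJ := by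
    rw [hBz, hdot']
  have hT3 : star z ⬝ᵥ B *ᵥ x' = sJ := by
    rw [dotProduct_mulVec]
    have : star z ᵥ* B = star C := by
      have := star_mulVec B z
      rw [hB.isHermitian.eq] at this
      rw [← this, hBz]
    rw [this, dotProduct_comm, hdot, hsJ, dotProduct_comm]
    rfl
  have hT4 : star z ⬝ᵥ B *ᵥ z = star s := by
    rw [hBz, star_dotProduct]
  -- positivity of the quadratic form at x' - z
  have hquad : 0 ≤ star (x' - z) ⬝ᵥ B *ᵥ (x' - z) := hB.posSemidef.dotProduct_mulVec_nonneg _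
  have hexpand : star (x' - z) ⬝ᵥ B *ᵥ (x' - z)
      = star x' ⬝ᵥ B *ᵥ x' - star x' ⬝ᵥ B *ᵥ z - star z ⬝ᵥ B *ᵥ x' + star z ⬝ᵥ B *ᵥ z := by
    rw [star_sub, mulVec_sub, sub_dotProduct, dotProduct_sub, dotProduct_sub]
    ring
  have hkey : sJ.re ≤ s.re := by
    rw [hexpand, hT1, hT2, hT3, hT4, sub_self, zero_sub, Complex.le_def] at hquad
    have := hquad.1
    simp only [Complex.add_re, Complex.neg_re, Complex.zero_re] at this
    have hsre : (star s).re = s.re := Complex.conj_re s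
    linarith [this, hsre.le, hsre.ge]
  -- determinant of BJ is a positive real
  have hdpos : 0 < BJ.det := hBJ.det_pos
  rw [Complex.lt_def] at hdpos
  obtain ⟨hdre, hdim⟩ := hdpos
  simp only [Complex.zero_re, Complex.zero_im] at hdre hdim
  -- conclude
  rw [hdet, Complex.mul_re, ← hdim, Complex.sub_re, Complex.sub_re]
  nlinarith [hkey, hdre]
end

section
/- Let A be an n×n positive definite Hermitian matrix with block form A = [[B, C],[C*, a]], where B is the leading (n-1)×(n-1) principal block and B is diagonal. For any integer 1 ≤ α ≤ n-1, S_{n-α}(λ(A)) ≥ (a − C* B^{-1} C) · S_{n-α-1}(λ(B)) + S_{n-α}(λ(B)), where λ(M) denotes the vector of eigenvalues of a Hermitian matrix M and S_k the k-th elementary symmetric polynomial. -/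
open Matrix Finset ComplexOrder

section Minors

variable {ι : Type*} [DecidableEq ι] [Fintype ι] {R : Type*} [CommRing R]

noncomputable def minor (M : Matrix ι ι R) (s : Finset ι) : R :=
  (M.submatrix (fun i : {x // x ∈ s} => (i : ι)) (fun i : {x // x ∈ s} => (i : ι))).det

def erow (i : ι) : ι → R := Pi.single i 1

theorem det_unit_rows (s : Finset ι) (N : Matrix ι ι R)
    (h : ∀ i ∈ s, N i = erow i) : N.det = minor N sᶜ := by
  classical
  rw [← det_submatrix_equiv_self (Equiv.sumCompl (· ∈ s)) N]
  have h1 : N.submatrix (Equiv.sumCompl (· ∈ s)) (Equiv.sumCompl (· ∈ s)) = fromBlocks 1 0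
      (N.submatrix (fun i : {x // ¬ x ∈ s} => (i : ι)) (fun i : {x // x ∈ s} => (i : ι)))
      (N.submatrix (fun i : {x // ¬ x ∈ s} => (i : ι)) (fun i : {x // ¬ x ∈ s} => (i : ι))) := by
    ext (i | i) (j | j)
    · show N i j = (1 : Matrix {x // x ∈ s} {x // x ∈ s} R) i j
      rw [h i i.2]
      simp [erow, Pi.single_apply, one_apply, Subtype.val_inj, eq_comm]
    · show N i j = 0
      rw [h i i.2]
      have : (j : ι) ≠ (i : ι) := fun hc => j.2 (hc ▸ i.2)
      simp [erow, Pi.single_apply, this]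
    · rfl
    · rfl
  rw [h1, det_fromBlocks_zero₁₂, det_one, one_mul, minor,
    ← det_submatrix_equiv_self (Equiv.subtypeEquivRight (fun x => (Finset.mem_compl (s := s)).symm)),
    submatrix_submatrix]
  rfl

theorem det_add_smul_one (M : Matrix ι ι R) (x : R) :
    (M + x • 1).det = ∑ s : Finset ι, x ^ sᶜ.card * minor M s := by
  classical
  have key := (detRowAlternating (R := R) (n := ι)).toMultilinearMap.map_add_univ
      (fun i => x • (erow i : ι → R)) (fun i => M i)
  have hrow : ((fun i => x • (erow i : ι → R)) + fun i => M i) = fun i => (M + x • 1) i := by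
    funext i j
    simp [erow, Matrix.one_apply, Pi.single_apply, eq_comm, mul_comm, add_comm]
  rw [hrow] at key
  have hdet : (M + x • 1).det
      = (detRowAlternating (R := R) (n := ι)).toMultilinearMap (fun i => (M + x • 1) i) := rfl
  rw [hdet, key]
  have step : ∀ s : Finset ι,
      (detRowAlternating (R := R) (n := ι)).toMultilinearMap
        (s.piecewise (fun i => x • (erow i : ι → R)) (fun i => M i))
      = x ^ s.card * minor M sᶜ := by
    intro s
    set m : ι → ι → R := s.piecewise (fun i => (erow i : ι → R)) (fun i => M i) with hm
    have hpw : s.piecewise (fun i => x • (erow i : ι → R)) (fun i => M i)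
        = s.piecewise (fun i => (fun _ : ι => x) i • m i) m := by
      funext i
      by_cases hi : i ∈ s
      · simp [hm, Finset.piecewise_eq_of_mem _ _ _ hi]
      · simp [hm, Finset.piecewise_eq_of_notMem _ _ _ hi]
    rw [hpw, MultilinearMap.map_piecewise_smul, Finset.prod_const, smul_eq_mul]
    congr 1
    have h1 : (detRowAlternating (R := R) (n := ι)).toMultilinearMap m = (Matrix.of m).det := rfl
    rw [h1, det_unit_rows s (Matrix.of m) (fun i hi => by
      show m i = erow i
      simp [hm, Finset.piecewise_eq_of_mem _ _ _ hi])]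
    unfold minor
    congr 1
    ext i j
    simp only [submatrix_apply, Matrix.of_apply, hm]
    rw [Finset.piecewise_eq_of_notMem]
    exact (Finset.mem_compl.mp i.2)
  simp only [step]
  exact Fintype.sum_equiv
      (Function.Involutive.toPerm (fun s : Finset ι => sᶜ) (fun s => compl_compl s))
      _ _ (fun s => by simp [Function.Involutive.toPerm])

theorem minor_diagonal (d : ι → R) (s : Finset ι) :
    minor (diagonal d) s = ∏ i ∈ s, d i := by
  rw [minor]
  have h : (diagonal d).submatrix (fun i : {x // x ∈ s} => (i : ι)) (fun i : {x // x ∈ s} => (i : ι))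
      = diagonal (fun i : {x // x ∈ s} => d i) := by
    ext i j
    by_cases hij : i = j
    · subst hij; simp
    · have : (i : ι) ≠ (j : ι) := fun hc => hij (Subtype.ext hc)
      simp [diagonal_apply_ne _ hij, diagonal_apply_ne _ this]
  rw [h, det_diagonal]
  exact Finset.prod_coe_sort s d

theorem minor_submatrix {κ : Type*} [DecidableEq κ] [Fintype κ]
    (A : Matrix κ κ R) (f : ι ↪ κ) (s : Finset ι) :
    minor A (s.map f) = minor (A.submatrix f f) s := by
  classical
  have hbij : Function.Bijective
      (fun i : {x // x ∈ s} => (⟨f i, Finset.mem_map_of_mem f i.2⟩ : {x // x ∈ s.map f})) := by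
    constructor
    · intro a b hab
      exact Subtype.ext (f.injective (congrArg Subtype.val hab))
    · rintro ⟨y, hy⟩
      obtain ⟨x, hx, rfl⟩ := Finset.mem_map.mp hy
      exact ⟨⟨x, hx⟩, rfl⟩
  rw [minor, minor, ← det_submatrix_equiv_self (Equiv.ofBijective _ hbij), submatrix_submatrix]
  rfl

end Minors

section Herm

theorem herm_det_add {n : Type*} [Fintype n] [DecidableEq n] {M : Matrix n n ℂ}
    (hM : M.IsHermitian) (x : ℂ) :
    (M + x • 1).det = ∏ i, ((hM.eigenvalues i : ℂ) + x) := by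
  set U : Matrix n n ℂ := (hM.eigenvectorUnitary : Matrix n n ℂ) with hU
  have hspec : M = U * diagonal (RCLike.ofReal ∘ hM.eigenvalues) * star U := hM.spectral_theorem
  have hUU : U * star U = 1 := by
    simp [hU]
  have h1 : M + x • 1 = U * (diagonal (RCLike.ofReal ∘ hM.eigenvalues) + x • 1) * star U := by
    rw [mul_add, add_mul, ← hspec]
    congr 1
    rw [Matrix.mul_smul, mul_one, Matrix.smul_mul, hUU]
  have hUU2 : star U * U = 1 := by
    simp [hU]
  rw [h1, det_mul, det_mul, mul_comm, ← mul_assoc, ← det_mul, hUU2, det_one, one_mul]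
  have h2 : diagonal (RCLike.ofReal ∘ hM.eigenvalues) + x • (1 : Matrix n n ℂ)
      = diagonal (fun i => (hM.eigenvalues i : ℂ) + x) := by
    rw [smul_one_eq_diagonal, diagonal_add]
    rfl
  rw [h2, det_diagonal]

open Polynomial in
theorem esym_eq_sum_minor {n k : ℕ} (M : Matrix (Fin n) (Fin n) ℂ) (hM : M.IsHermitian)
    (hk : k ≤ n) :
    ((esym n k hM.eigenvalues : ℝ) : ℂ)
      = ∑ s ∈ powersetCard k (univ : Finset (Fin n)), minor M s := by
  classical
  set lam := hM.eigenvalues with hlam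
  set c : ℕ → ℂ := fun j => ∑ s ∈ powersetCard j (univ : Finset (Fin n)), minor M s with hc
  have hpq : (∏ i, (X + C ((lam i : ℂ))))
      = ∑ j ∈ range (n+1), C (c (n-j)) * X^j := by
    apply Polynomial.funext
    intro x
    have lhs1 : (∏ i, (X + C ((lam i : ℂ)))).eval x = (M + x • 1).det := by
      rw [herm_det_add hM x, eval_prod]
      exact Finset.prod_congr rfl fun i _ => by simp [add_comm, hlam]
    have lhs2 : (M + x • 1).det = ∑ j ∈ range (n+1), c j * x ^ (n - j) := by
      rw [det_add_smul_one]
      have : (∑ s : Finset (Fin n), x ^ sᶜ.card * minor M s)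
          = ∑ s ∈ (univ : Finset (Fin n)).powerset, x ^ sᶜ.card * minor M s := by
        rw [Finset.powerset_univ]
      rw [this, Finset.sum_powerset]
      refine Finset.sum_congr (by simp) fun j hj => ?_
      show ∑ t ∈ powersetCard j (univ : Finset (Fin n)), x ^ tᶜ.card * minor M t
          = (∑ s ∈ powersetCard j (univ : Finset (Fin n)), minor M s) * x ^ (n - j)
      rw [Finset.sum_mul]
      refine Finset.sum_congr rfl fun s hs => ?_
      have hcard : s.card = j := (Finset.mem_powersetCard.mp hs).2
      rw [Finset.card_compl, Fintype.card_fin, hcard, mul_comm]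
    have rhs1 : (∑ j ∈ range (n+1), C (c (n-j)) * X^j).eval x
        = ∑ j ∈ range (n+1), c (n-j) * x ^ j := by
      simp [eval_finset_sum]
    rw [lhs1, lhs2, rhs1]
    rw [← Finset.sum_range_reflect (fun j => c (n-j) * x ^ j) (n+1)]
    refine Finset.sum_congr rfl fun j hj => ?_
    have hj' : j ≤ n := Nat.lt_succ_iff.mp (Finset.mem_range.mp hj)
    rw [show n + 1 - 1 - j = n - j from rfl, Nat.sub_sub_self hj', mul_comm]
  have hco := congrArg (fun p => Polynomial.coeff p (n - k)) hpq
  rw [Finset.prod_X_add_C_coeff (univ : Finset (Fin n)) (fun i => (lam i : ℂ))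
      (by simp [Nat.sub_le]), Finset.card_univ, Fintype.card_fin, Nat.sub_sub_self hk] at hco
  have hq : (∑ j ∈ range (n+1), C (c (n-j)) * X^j).coeff (n-k) = c k := by
    rw [finset_sum_coeff]
    simp only [coeff_C_mul, coeff_X_pow, mul_ite, mul_one, mul_zero]
    rw [Finset.sum_ite_eq]
    simp [Nat.lt_succ_iff, Nat.sub_le, Nat.sub_sub_self hk]
  rw [hq] at hco
  rw [esym]
  push_cast
  exact hco

end Herm

theorem minor_arrow {m : ℕ} (A : Matrix (Fin (m+1)) (Fin (m+1)) ℂ)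
    (b : Fin m → ℝ) (c : Fin m → ℂ) (aR : ℝ)
    (hb : ∀ i, b i ≠ 0)
    (hBdiag : ∀ i j : Fin m, i ≠ j → A i.castSucc j.castSucc = 0)
    (hBd : ∀ i, A i.castSucc i.castSucc = (b i : ℂ))
    (hcol : ∀ i, A i.castSucc (Fin.last m) = c i)
    (hrow : ∀ i, A (Fin.last m) i.castSucc = starRingEnd ℂ (c i))
    (ha : A (Fin.last m) (Fin.last m) = (aR : ℂ))
    (s : Finset (Fin m)) :
    minor A (insert (Fin.last m) (s.map ⟨Fin.castSucc, Fin.castSucc_injective m⟩))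
      = ((∏ i ∈ s, b i : ℝ) : ℂ) * ((aR : ℂ) - ((∑ i ∈ s, ‖c i‖^2 / b i : ℝ) : ℂ)) := by
  classical
  set S : Finset (Fin (m+1)) :=
    insert (Fin.last m) (s.map ⟨Fin.castSucc, Fin.castSucc_injective m⟩) with hS
  have hmem : ∀ i : {x // x ∈ s}, (i : Fin m).castSucc ∈ S := fun i =>
    Finset.mem_insert_of_mem (Finset.mem_map_of_mem _ i.2)
  set g : {x // x ∈ s} ⊕ Unit → {x // x ∈ S} :=
    Sum.elim (fun i => ⟨(i : Fin m).castSucc, hmem i⟩)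
      (fun _ => ⟨Fin.last m, Finset.mem_insert_self _ _⟩) with hg
  have hbij : Function.Bijective g := by
    constructor
    · rintro (i | i) (j | j) hij <;> simp only [hg, Sum.elim_inl, Sum.elim_inr] at hij
      · have : (i : Fin m).castSucc = (j : Fin m).castSucc := congrArg Subtype.val hij
        exact congrArg Sum.inl (Subtype.ext (Fin.castSucc_injective m this))
      · exact absurd (congrArg Subtype.val hij) (Fin.castSucc_lt_last _).ne
      · exact absurd (congrArg Subtype.val hij) (Fin.castSucc_lt_last _).ne'
      · rfl
    · rintro ⟨y, hy⟩
      rcases Finset.mem_insert.mp hy with h | h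
      · exact ⟨Sum.inr (), by simp [hg, h]⟩
      · obtain ⟨x, hx, rfl⟩ := Finset.mem_map.mp h
        exact ⟨Sum.inl ⟨x, hx⟩, rfl⟩
  rw [minor, ← det_submatrix_equiv_self (Equiv.ofBijective g hbij), submatrix_submatrix]
  have hblocks : A.submatrix ((fun i : {x // x ∈ S} => (i : Fin (m+1))) ∘ (Equiv.ofBijective g hbij))
        ((fun i : {x // x ∈ S} => (i : Fin (m+1))) ∘ (Equiv.ofBijective g hbij))
      = fromBlocks (diagonal fun i : {x // x ∈ s} => ((b i : ℝ) : ℂ))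
          (of fun i _ => c i) (of fun _ j => starRingEnd ℂ (c j)) (of fun _ _ => (aR : ℂ)) := by
    ext (i | i) (j | j)
    · show A (i : Fin m).castSucc (j : Fin m).castSucc = _
      by_cases hij : i = j
      · subst hij
        simp [hBd, diagonal_apply_eq]
      · have hne : (i : Fin m) ≠ (j : Fin m) := fun hc => hij (Subtype.ext hc)
        rw [hBdiag _ _ hne, fromBlocks_apply₁₁, diagonal_apply_ne _ hij]
    · exact hcol _
    · exact hrow _
    · exact ha
  rw [hblocks]
  letI : Invertible (diagonal fun i : {x // x ∈ s} => ((b i : ℝ) : ℂ)) :=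
    ⟨diagonal fun i : {x // x ∈ s} => (((b i : ℝ) : ℂ))⁻¹,
      by
        rw [diagonal_mul_diagonal]
        rw [show (fun i : {x // x ∈ s} => (((b i : ℝ) : ℂ))⁻¹ * ((b i : ℝ) : ℂ)) = fun _ => 1
          from funext fun i => inv_mul_cancel₀ (by exact_mod_cast hb i), diagonal_one],
      by
        rw [diagonal_mul_diagonal]
        rw [show (fun i : {x // x ∈ s} => ((b i : ℝ) : ℂ) * (((b i : ℝ) : ℂ))⁻¹) = fun _ => 1
          from funext fun i => mul_inv_cancel₀ (by exact_mod_cast hb i), diagonal_one]⟩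
  rw [det_fromBlocks₁₁, det_diagonal]
  congr 1
  · rw [← Finset.prod_coe_sort s b]
    push_cast
    rfl
  · rw [det_unique]
    have hinv : ⅟(diagonal fun i : {x // x ∈ s} => ((b i : ℝ) : ℂ))
        = diagonal fun i : {x // x ∈ s} => (((b i : ℝ) : ℂ))⁻¹ := rfl
    rw [Matrix.sub_apply, hinv, mul_apply]
    congr 1
    simp only [mul_diagonal, of_apply]
    have hterm : ∀ j : Fin m, starRingEnd ℂ (c j) * (((b j : ℝ) : ℂ))⁻¹ * c j
        = ((‖c j‖^2 / b j : ℝ) : ℂ) := by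
      intro j
      have h1 : starRingEnd ℂ (c j) * (((b j : ℝ) : ℂ))⁻¹ * c j
          = (starRingEnd ℂ (c j) * c j) * (((b j : ℝ) : ℂ))⁻¹ := by ring
      rw [h1, Complex.conj_mul']
      push_cast
      ring
    calc (∑ j : {x // x ∈ s}, starRingEnd ℂ (c j) * (((b j : ℝ) : ℂ))⁻¹ * c j)
        = ∑ j ∈ s, starRingEnd ℂ (c j) * (((b j : ℝ) : ℂ))⁻¹ * c j :=
          Finset.sum_coe_sort s (fun j => starRingEnd ℂ (c j) * (((b j : ℝ) : ℂ))⁻¹ * c j)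
      _ = ∑ j ∈ s, ((‖c j‖^2 / b j : ℝ) : ℂ) := Finset.sum_congr rfl fun j _ => hterm j
      _ = ((∑ j ∈ s, ‖c j‖^2 / b j : ℝ) : ℂ) := by push_cast; rfl

theorem stmt3 (m : ℕ) (A : Matrix (Fin (m+1)) (Fin (m+1)) ℂ) (hA : A.PosDef)
    (hdiag : ∀ i j : Fin m, i ≠ j → A (Fin.castSucc i) (Fin.castSucc j) = 0)
    (α : ℕ) (hα1 : 1 ≤ α) (hα2 : α ≤ m) :
    esym (m+1) (m+1-α) hA.1.eigenvalues ≥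
      (A (Fin.last m) (Fin.last m)
          - star (fun i : Fin m => A (Fin.castSucc i) (Fin.last m)) ⬝ᵥ
              ((A.submatrix Fin.castSucc Fin.castSucc)⁻¹ *ᵥ
                fun i : Fin m => A (Fin.castSucc i) (Fin.last m))).re
        * esym m (m-α) (hA.1.submatrix Fin.castSucc).eigenvalues
      + esym m (m+1-α) (hA.1.submatrix Fin.castSucc).eigenvalues := by
  classical
  have hherm := hA.1
  set b : Fin m → ℝ := fun i => (A i.castSucc i.castSucc).re with hbdef
  set c : Fin m → ℂ := fun i => A i.castSucc (Fin.last m) with hcdef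
  set aR : ℝ := (A (Fin.last m) (Fin.last m)).re with haRdef
  have hreal : ∀ j : Fin (m+1), A j j = ((A j j).re : ℂ) := fun j =>
    (Complex.conj_eq_iff_re.mp (hherm.apply j j)).symm
  have hbC : ∀ i, A i.castSucc i.castSucc = (b i : ℂ) := fun i => hreal _
  have haC : A (Fin.last m) (Fin.last m) = (aR : ℂ) := hreal _
  have hrowc : ∀ i, A (Fin.last m) i.castSucc = starRingEnd ℂ (c i) := fun i =>
    (hherm.apply (Fin.last m) i.castSucc).symm
  have hbpos : ∀ i, 0 < b i := by
    intro i
    have hx : (Pi.single i.castSucc 1 : Fin (m+1) → ℂ) ≠ 0 := by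
      intro h
      have := congrFun h i.castSucc
      simp at this
    have h := hA.re_dotProduct_pos hx
    have hdot : star (Pi.single i.castSucc (1:ℂ)) ⬝ᵥ (A *ᵥ Pi.single i.castSucc 1)
        = A i.castSucc i.castSucc := by
      rw [mulVec_single]
      simp [dotProduct, Pi.single_apply, apply_ite, Finset.sum_ite_eq']
    rw [hdot] at h
    exact h
  set q : Fin m → ℝ := fun i => ‖c i‖^2 / b i with hqdef
  have hq0 : ∀ i, 0 ≤ q i := fun i => div_nonneg (by positivity) (hbpos i).le
  have hBdiag : A.submatrix Fin.castSucc Fin.castSucc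
      = diagonal (fun i => ((b i : ℝ) : ℂ)) := by
    ext i j
    by_cases hij : i = j
    · subst hij; simp [hbC]
    · simp [diagonal_apply_ne _ hij, hdiag i j hij]
  -- The Schur complement term
  have hBinv : (A.submatrix Fin.castSucc Fin.castSucc)⁻¹
      = diagonal (fun i => (((b i : ℝ) : ℂ))⁻¹) := by
    apply inv_eq_right_inv
    rw [hBdiag, diagonal_mul_diagonal,
      show (fun i : Fin m => ((b i : ℝ) : ℂ) * (((b i : ℝ) : ℂ))⁻¹) = fun _ => 1
        from funext fun i => mul_inv_cancel₀ (by exact_mod_cast (hbpos i).ne'), diagonal_one]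
  have hg : (A (Fin.last m) (Fin.last m)
      - star (fun i : Fin m => A (Fin.castSucc i) (Fin.last m)) ⬝ᵥ
        ((A.submatrix Fin.castSucc Fin.castSucc)⁻¹ *ᵥ
          fun i : Fin m => A (Fin.castSucc i) (Fin.last m))).re
      = aR - ∑ i, q i := by
    have h1 : (fun i : Fin m => A (Fin.castSucc i) (Fin.last m)) = c := rfl
    rw [h1, hBinv, haC]
    have h2 : star c ⬝ᵥ (diagonal (fun i => (((b i : ℝ) : ℂ))⁻¹) *ᵥ c)
        = ((∑ i, q i : ℝ) : ℂ) := by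
      rw [dotProduct]
      have hterm : ∀ j : Fin m,
          star c j * (diagonal (fun i => (((b i : ℝ) : ℂ))⁻¹) *ᵥ c) j = ((q j : ℝ) : ℂ) := by
        intro j
        rw [mulVec_diagonal]
        have h3 : star c j * ((((b j : ℝ) : ℂ))⁻¹ * c j)
            = (starRingEnd ℂ (c j) * c j) * (((b j : ℝ) : ℂ))⁻¹ := by
          simp only [Pi.star_apply, Complex.star_def]
          ring
        rw [h3, Complex.conj_mul', hqdef]
        push_cast
        ring
      rw [Finset.sum_congr rfl fun j _ => hterm j]
      push_cast
      rfl
    rw [h2]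
    simp
  -- esym identities for B
  have hα2' : m - α ≤ m := Nat.sub_le _ _
  have hα3' : m + 1 - α ≤ m := by omega
  have hminorB : ∀ s : Finset (Fin m),
      minor (A.submatrix Fin.castSucc Fin.castSucc) s = ((∏ i ∈ s, b i : ℝ) : ℂ) := by
    intro s
    rw [hBdiag, minor_diagonal]
    push_cast
    rfl
  have hEB : ∀ k : ℕ, k ≤ m → esym m k (hA.1.submatrix Fin.castSucc).eigenvalues
      = ∑ s ∈ powersetCard k (univ : Finset (Fin m)), ∏ i ∈ s, b i := by
    intro k hk
    apply Complex.ofReal_injective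
    rw [esym_eq_sum_minor (A.submatrix Fin.castSucc Fin.castSucc) (hA.1.submatrix Fin.castSucc) hk,
      Finset.sum_congr rfl fun s _ => hminorB s]
    push_cast
    rfl
  -- decomposition of esym for A
  set emb : Fin m ↪ Fin (m+1) := ⟨Fin.castSucc, Fin.castSucc_injective m⟩ with hembdef
  have hembmem : ∀ (s : Finset (Fin m)) (i : Fin m), i.castSucc ∈ s.map emb ↔ i ∈ s :=
    fun s i => Finset.mem_map' emb
  have hminorB' : ∀ s : Finset (Fin m),
      minor (A.submatrix (⇑emb) (⇑emb)) s = ((∏ i ∈ s, b i : ℝ) : ℂ) := fun s => hminorB s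
  have hrecon1 : ∀ S : Finset (Fin (m+1)), Fin.last m ∉ S →
      ((univ : Finset (Fin m)).filter (fun i => Fin.castSucc i ∈ S)).map emb = S := by
    intro S hS
    ext j
    refine Fin.lastCases ?_ ?_ j
    · simp only [Finset.mem_map, Finset.mem_filter, Finset.mem_univ, true_and]
      constructor
      · rintro ⟨i, hi, hcontr⟩
        exact absurd hcontr (Fin.castSucc_lt_last i).ne
      · intro h; exact absurd h hS
    · intro i
      rw [hembmem, Finset.mem_filter]
      simp
  have hrecon2 : ∀ s : Finset (Fin m),
      (univ : Finset (Fin m)).filter (fun i => Fin.castSucc i ∈ s.map emb) = s := by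
    intro s
    ext i
    rw [Finset.mem_filter, hembmem]
    simp
  have hrecon3 : ∀ S : Finset (Fin (m+1)), Fin.last m ∈ S →
      insert (Fin.last m) (((univ : Finset (Fin m)).filter
        (fun i => Fin.castSucc i ∈ S)).map emb) = S := by
    intro S hS
    ext j
    refine Fin.lastCases ?_ ?_ j
    · simp [hS]
    · intro i
      rw [Finset.mem_insert, hembmem, Finset.mem_filter]
      simp [(Fin.castSucc_lt_last i).ne]
  have hrecon4 : ∀ s : Finset (Fin m),
      (univ : Finset (Fin m)).filter
        (fun i => Fin.castSucc i ∈ insert (Fin.last m) (s.map emb)) = s := by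
    intro s
    ext i
    rw [Finset.mem_filter, Finset.mem_insert, hembmem]
    simp [(Fin.castSucc_lt_last i).ne]
  have hlast_notmem_map : ∀ s : Finset (Fin m), Fin.last m ∉ s.map emb := by
    intro s h
    obtain ⟨x, _, hx⟩ := Finset.mem_map.mp h
    exact absurd hx (Fin.castSucc_lt_last x).ne
  have hEA : esym (m+1) (m+1-α) hA.1.eigenvalues
      = (∑ s ∈ powersetCard (m+1-α) (univ : Finset (Fin m)), ∏ i ∈ s, b i)
        + ∑ s ∈ powersetCard (m-α) (univ : Finset (Fin m)),
            (∏ i ∈ s, b i) * (aR - ∑ i ∈ s, q i) := by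
    apply Complex.ofReal_injective
    rw [esym_eq_sum_minor A hA.1 (by omega : m+1-α ≤ m+1)]
    rw [← Finset.sum_filter_add_sum_filter_not
      (powersetCard (m+1-α) (univ : Finset (Fin (m+1)))) (fun S => Fin.last m ∈ S) (minor A)]
    have hsum1 : ∑ S ∈ (powersetCard (m+1-α) (univ : Finset (Fin (m+1)))).filter
          (fun S => ¬ Fin.last m ∈ S), minor A S
        = ∑ s ∈ powersetCard (m+1-α) (univ : Finset (Fin m)), ((∏ i ∈ s, b i : ℝ) : ℂ) := by
      refine Finset.sum_nbij'
        (fun S => (univ : Finset (Fin m)).filter (fun i => Fin.castSucc i ∈ S))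
        (fun s => s.map emb) ?_ ?_ ?_ ?_ ?_
      · intro S hS
        rw [Finset.mem_filter] at hS
        obtain ⟨hS1, hS2⟩ := hS
        rw [Finset.mem_powersetCard_univ]
        have hcard := Finset.card_map emb
          (s := (univ : Finset (Fin m)).filter (fun i => Fin.castSucc i ∈ S))
        rw [hrecon1 S hS2] at hcard
        rw [← hcard, (Finset.mem_powersetCard_univ).mp hS1]
      · intro s hs
        rw [Finset.mem_filter, Finset.mem_powersetCard_univ, Finset.card_map]
        exact ⟨(Finset.mem_powersetCard_univ).mp hs, hlast_notmem_map s⟩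
      · intro S hS
        exact hrecon1 S (Finset.mem_filter.mp hS).2
      · intro s _
        exact hrecon2 s
      · intro S hS
        have hS2 := (Finset.mem_filter.mp hS).2
        conv_lhs => rw [← hrecon1 S hS2, minor_submatrix]
        exact hminorB' _
    have hsum2 : ∑ S ∈ (powersetCard (m+1-α) (univ : Finset (Fin (m+1)))).filter
          (fun S => Fin.last m ∈ S), minor A S
        = ∑ s ∈ powersetCard (m-α) (univ : Finset (Fin m)),
            (((∏ i ∈ s, b i) * (aR - ∑ i ∈ s, q i) : ℝ) : ℂ) := by
      refine Finset.sum_nbij'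
        (fun S => (univ : Finset (Fin m)).filter (fun i => Fin.castSucc i ∈ S))
        (fun s => insert (Fin.last m) (s.map emb)) ?_ ?_ ?_ ?_ ?_
      · intro S hS
        rw [Finset.mem_filter] at hS
        obtain ⟨hS1, hS2⟩ := hS
        rw [Finset.mem_powersetCard_univ]
        have hcard : (insert (Fin.last m) (((univ : Finset (Fin m)).filter
            (fun i => Fin.castSucc i ∈ S)).map emb)).card
            = ((univ : Finset (Fin m)).filter (fun i => Fin.castSucc i ∈ S)).card + 1 := by
          rw [Finset.card_insert_of_notMem (hlast_notmem_map _), Finset.card_map]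
        rw [hrecon3 S hS2] at hcard
        have := (Finset.mem_powersetCard_univ).mp hS1
        omega
      · intro s hs
        rw [Finset.mem_filter, Finset.mem_powersetCard_univ,
          Finset.card_insert_of_notMem (hlast_notmem_map s), Finset.card_map]
        have := (Finset.mem_powersetCard_univ).mp hs
        exact ⟨by omega, Finset.mem_insert_self _ _⟩
      · intro S hS
        exact hrecon3 S (Finset.mem_filter.mp hS).2
      · intro s _
        exact hrecon4 s
      · intro S hS
        have hS2 := (Finset.mem_filter.mp hS).2
        conv_lhs => rw [← hrecon3 S hS2,
          minor_arrow A b c aR (fun i => (hbpos i).ne') hdiag hbC (fun i => rfl) hrowc haC]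
        simp only [hqdef]
        push_cast
        ring
    rw [hsum1, hsum2]
    push_cast
    ring
  rw [hEA, hg, hEB (m-α) hα2', hEB (m+1-α) hα3']
  have hmain : ∑ s ∈ powersetCard (m-α) (univ : Finset (Fin m)),
        (∏ i ∈ s, b i) * (aR - ∑ i ∈ s, q i)
      ≥ (aR - ∑ i, q i) * ∑ s ∈ powersetCard (m-α) (univ : Finset (Fin m)), ∏ i ∈ s, b i := by
    rw [Finset.mul_sum]
    refine Finset.sum_le_sum fun s _ => ?_
    rw [mul_comm]
    apply mul_le_mul_of_nonneg_left _ (Finset.prod_nonneg fun i _ => (hbpos i).le)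
    apply sub_le_sub_left
    exact Finset.sum_le_sum_of_subset_of_nonneg (Finset.subset_univ s) fun i _ _ => hq0 i
  linarith
end

section
/- Let A be an n×n positive definite Hermitian matrix with block decomposition A = [[B, C],[C*, a]], B the leading (n-1)×(n-1) block. Fix an integer 1 ≤ α ≤ n-1 and suppose all eigenvalues of A lie in an interval [m, M] with 0 < m ≤ M. Then there exists c_0 > 0, depending only on n, α, m, M, such that S_{n-1}(λ(B))/S_{n-α-1}(λ(B)) ≥ (1 + c_0) · S_n(λ(A))/S_{n-α}(λ(A)), where S_k is the k-th elementary symmetric polynomial and λ(·) the eigenvalue vector (with the convention S_0 = 1). -/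
open Matrix Finset ComplexOrder

open Polynomial


lemma esym_self (N : ℕ) (ν : Fin N → ℝ) : esym N N ν = ∏ i, ν i := by
  unfold esym
  have h : (univ : Finset (Fin N)).powersetCard N = {univ} := by
    have := Finset.powersetCard_self (univ : Finset (Fin N))
    simpa using this
  rw [h, Finset.sum_singleton]

lemma esym_le (N k : ℕ) (hk : k ≤ N) (ν : Fin N → ℝ) (Mhi : ℝ)
    (h0 : ∀ i, 0 ≤ ν i) (hub : ∀ i, ν i ≤ Mhi) :
    esym N k ν ≤ (N.choose k) * Mhi ^ k := by
  unfold esym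
  have : ∀ T ∈ (univ : Finset (Fin N)).powersetCard k, ∏ i ∈ T, ν i ≤ Mhi ^ k := by
    intro T hT
    have hc : T.card = k := (Finset.mem_powersetCard.mp hT).2
    calc ∏ i ∈ T, ν i ≤ ∏ _i ∈ T, Mhi :=
          Finset.prod_le_prod (fun i _ => h0 i) (fun i _ => hub i)
      _ = Mhi ^ k := by rw [Finset.prod_const, hc]
  calc ∑ T ∈ (univ : Finset (Fin N)).powersetCard k, ∏ i ∈ T, ν i
      ≤ ((univ : Finset (Fin N)).powersetCard k).card • (Mhi ^ k) :=
        Finset.sum_le_card_nsmul _ _ _ this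
    _ = (N.choose k) * Mhi ^ k := by
        rw [Finset.card_powersetCard, Finset.card_univ, Fintype.card_fin, nsmul_eq_mul]

lemma esym_ge (N k : ℕ) (ν : Fin N → ℝ) (mlo : ℝ)
    (hm : 0 ≤ mlo) (hlb : ∀ i, mlo ≤ ν i) :
    (N.choose k) * mlo ^ k ≤ esym N k ν := by
  unfold esym
  have : ∀ T ∈ (univ : Finset (Fin N)).powersetCard k, mlo ^ k ≤ ∏ i ∈ T, ν i := by
    intro T hT
    have hc : T.card = k := (Finset.mem_powersetCard.mp hT).2
    calc mlo ^ k = ∏ _i ∈ T, mlo := by rw [Finset.prod_const, hc]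
      _ ≤ ∏ i ∈ T, ν i := Finset.prod_le_prod (fun _ _ => hm) (fun i _ => hlb i)
  calc ((N.choose k) : ℝ) * mlo ^ k
      = ((univ : Finset (Fin N)).powersetCard k).card • (mlo ^ k) := by
        rw [Finset.card_powersetCard, Finset.card_univ, Fintype.card_fin, nsmul_eq_mul]
    _ ≤ ∑ T ∈ (univ : Finset (Fin N)).powersetCard k, ∏ i ∈ T, ν i :=
        Finset.card_nsmul_le_sum _ _ _ this

lemma coeff_prod_esym (N k : ℕ) (hk : k ≤ N) (ν : Fin N → ℝ) :
    (∏ i : Fin N, (X + C (ν i))).coeff k = esym N (N - k) ν := by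
  have hcard : #(univ : Finset (Fin N)) = N := by simp
  have h : k ≤ #(univ : Finset (Fin N)) := by rw [hcard]; exact hk
  rw [Finset.prod_X_add_C_coeff _ _ h, hcard]
  rfl

lemma coeff_prod_nonneg {ι : Type*} [DecidableEq ι] (s : Finset ι) (f : ι → ℝ)
    (h : ∀ i ∈ s, 0 ≤ f i) (k : ℕ) : 0 ≤ (∏ i ∈ s, (X + C (f i))).coeff k := by
  induction s using Finset.cons_induction generalizing k with
  | empty => simp [Polynomial.coeff_one]; positivity
  | cons a s ha ih =>
      rw [Finset.prod_cons, add_mul, Polynomial.coeff_add]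
      have h1 : ∀ i ∈ s, 0 ≤ f i := fun i hi => h i (Finset.mem_cons_of_mem hi)
      have ha0 : 0 ≤ f a := h a (Finset.mem_cons_self a s)
      have h2 : 0 ≤ (C (f a) * ∏ i ∈ s, (X + C (f i))).coeff k := by
        rw [Polynomial.coeff_C_mul]; exact mul_nonneg ha0 (ih h1 k)
      cases k with
      | zero => simpa [Polynomial.mul_coeff_zero] using h2
      | succ n =>
          rw [Polynomial.coeff_X_mul]
          exact add_nonneg (ih h1 n) h2


section Herm
variable {N : ℕ} {M : Matrix (Fin N) (Fin N) ℂ}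

lemma herm_add_smul (hM : M.IsHermitian) (t : ℂ) :
    M + t • 1 = (hM.eigenvectorUnitary : Matrix (Fin N) (Fin N) ℂ) *
      diagonal (fun i => (hM.eigenvalues i : ℂ) + t) *
      star (hM.eigenvectorUnitary : Matrix (Fin N) (Fin N) ℂ) := by
  have hUs : (hM.eigenvectorUnitary : Matrix (Fin N) (Fin N) ℂ) *
      star (hM.eigenvectorUnitary : Matrix (Fin N) (Fin N) ℂ) = 1 :=
    (Matrix.mem_unitaryGroup_iff).mp hM.eigenvectorUnitary.2
  have hdiag : diagonal (fun i => (hM.eigenvalues i : ℂ) + t) =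
      diagonal ((↑) ∘ hM.eigenvalues) + t • 1 := by
    rw [← Matrix.diagonal_one, ← Matrix.diagonal_smul, Matrix.diagonal_add]
    congr 1
    funext i
    simp
  rw [hdiag, Matrix.mul_add, Matrix.add_mul, Matrix.mul_smul, Matrix.smul_mul, Matrix.mul_one,
    hUs]
  conv_lhs => rw [hM.spectral_theorem]
  rfl

lemma det_herm_add_smul (hM : M.IsHermitian) (t : ℂ) :
    det (M + t • 1) = ∏ i, ((hM.eigenvalues i : ℂ) + t) := by
  rw [herm_add_smul hM t, Matrix.det_mul_right_comm,
    (Matrix.mem_unitaryGroup_iff).mp hM.eigenvectorUnitary.2, Matrix.one_mul, det_diagonal]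

lemma posSemidef_sub_smul (hM : M.IsHermitian) {r : ℝ}
    (h : ∀ i, r ≤ hM.eigenvalues i) : (M - (r:ℂ) • 1).PosSemidef := by
  have h1 : M - (r:ℂ) • 1 = M + (-(r:ℂ)) • 1 := by rw [neg_smul, ← sub_eq_add_neg]
  rw [h1, herm_add_smul hM]
  have hd : Matrix.PosSemidef (diagonal (fun i => (hM.eigenvalues i : ℂ) + -(r:ℂ))) := by
    refine Matrix.PosSemidef.diagonal (Pi.le_def.mpr fun i => ?_)
    simp only [Pi.zero_apply]
    show (0:ℂ) ≤ (hM.eigenvalues i : ℂ) + -(r:ℂ)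
    have : ((hM.eigenvalues i : ℂ) + -(r:ℂ)) = ((hM.eigenvalues i - r : ℝ) : ℂ) := by
      push_cast; ring
    rw [this, Complex.zero_le_real]
    linarith [h i]
  have := hd.mul_mul_conjTranspose_same (hM.eigenvectorUnitary : Matrix (Fin N) (Fin N) ℂ)
  simpa [Matrix.star_eq_conjTranspose] using this

lemma posSemidef_smul_sub (hM : M.IsHermitian) {r : ℝ}
    (h : ∀ i, hM.eigenvalues i ≤ r) : ((r:ℂ) • 1 - M).PosSemidef := by
  have h1 : (r:ℂ) • 1 - M = -(M + (-(r:ℂ)) • 1) := by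
    rw [neg_smul, ← sub_eq_add_neg, neg_sub]
  rw [h1, herm_add_smul hM, ← Matrix.neg_mul, ← Matrix.mul_neg]
  have hneg : -(diagonal (fun i => (hM.eigenvalues i : ℂ) + -(r:ℂ)))
      = diagonal (fun i => -((hM.eigenvalues i : ℂ) + -(r:ℂ))) := by
    rw [← Matrix.diagonal_neg]
  rw [hneg]
  have hd : Matrix.PosSemidef (diagonal (fun i => -((hM.eigenvalues i : ℂ) + -(r:ℂ)))) := by
    refine Matrix.PosSemidef.diagonal (Pi.le_def.mpr fun i => ?_)
    simp only [Pi.zero_apply]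
    show (0:ℂ) ≤ -((hM.eigenvalues i : ℂ) + -(r:ℂ))
    have : -((hM.eigenvalues i : ℂ) + -(r:ℂ)) = ((r - hM.eigenvalues i : ℝ) : ℂ) := by
      push_cast; ring
    rw [this, Complex.zero_le_real]
    linarith [h i]
  have := hd.mul_mul_conjTranspose_same (hM.eigenvectorUnitary : Matrix (Fin N) (Fin N) ℂ)
  simpa [Matrix.star_eq_conjTranspose] using this

lemma eig_ge_of_psd (hM : M.IsHermitian) {r : ℝ}
    (h : (M - (r:ℂ) • 1).PosSemidef) (j : Fin N) : r ≤ hM.eigenvalues j := by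
  set u : Fin N → ℂ := ⇑(hM.eigenvectorBasis j) with hu
  have hui : ∀ i, (hM.eigenvectorBasis j) i = u i := fun _ => rfl
  have hne : hM.eigenvectorBasis j ≠ 0 := hM.eigenvectorBasis.orthonormal.ne_zero j
  have hex : ∃ i, u i ≠ 0 := by
    by_contra hc
    push_neg at hc
    exact hne (by ext i; exact hc i)
  obtain ⟨i0, hi0⟩ := hex
  have hS : 0 < ∑ i, Complex.normSq (u i) :=
    Finset.sum_pos' (fun i _ => Complex.normSq_nonneg _)
      ⟨i0, Finset.mem_univ _, Complex.normSq_pos.mpr hi0⟩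
  have hmv : (M - (r:ℂ) • 1) *ᵥ u = ((hM.eigenvalues j - r : ℝ) : ℂ) • u := by
    rw [Matrix.sub_mulVec, hM.mulVec_eigenvectorBasis, Matrix.smul_mulVec, Matrix.one_mulVec]
    ext i
    simp only [Pi.sub_apply, Pi.smul_apply, Complex.real_smul, smul_eq_mul, hui]
    push_cast
    ring
  have hdot : star u ⬝ᵥ ((M - (r:ℂ) • 1) *ᵥ u)
      = ((hM.eigenvalues j - r : ℝ) : ℂ) * ((∑ i, Complex.normSq (u i) : ℝ) : ℂ) := by
    rw [hmv, dotProduct_smul]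
    rw [smul_eq_mul]
    congr 1
    simp only [dotProduct, Pi.star_apply, RCLike.star_def]
    push_cast
    refine Finset.sum_congr rfl fun i _ => ?_
    rw [mul_comm, Complex.mul_conj]
  have h0 := h.re_dotProduct_nonneg u
  rw [hdot] at h0
  have : (0:ℝ) ≤ (hM.eigenvalues j - r) * (∑ i, Complex.normSq (u i)) := by
    simpa [← Complex.ofReal_mul] using h0
  nlinarith

lemma eig_le_of_psd (hM : M.IsHermitian) {r : ℝ}
    (h : ((r:ℂ) • 1 - M).PosSemidef) (j : Fin N) : hM.eigenvalues j ≤ r := by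
  set u : Fin N → ℂ := ⇑(hM.eigenvectorBasis j) with hu
  have hui : ∀ i, (hM.eigenvectorBasis j) i = u i := fun _ => rfl
  have hne : hM.eigenvectorBasis j ≠ 0 := hM.eigenvectorBasis.orthonormal.ne_zero j
  have hex : ∃ i, u i ≠ 0 := by
    by_contra hc
    push_neg at hc
    exact hne (by ext i; exact hc i)
  obtain ⟨i0, hi0⟩ := hex
  have hS : 0 < ∑ i, Complex.normSq (u i) :=
    Finset.sum_pos' (fun i _ => Complex.normSq_nonneg _)
      ⟨i0, Finset.mem_univ _, Complex.normSq_pos.mpr hi0⟩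
  have hmv : ((r:ℂ) • 1 - M) *ᵥ u = ((r - hM.eigenvalues j : ℝ) : ℂ) • u := by
    rw [Matrix.sub_mulVec, hM.mulVec_eigenvectorBasis, Matrix.smul_mulVec, Matrix.one_mulVec]
    ext i
    simp only [Pi.sub_apply, Pi.smul_apply, Complex.real_smul, smul_eq_mul, hui]
    push_cast
    ring
  have hdot : star u ⬝ᵥ (((r:ℂ) • 1 - M) *ᵥ u)
      = ((r - hM.eigenvalues j : ℝ) : ℂ) * ((∑ i, Complex.normSq (u i) : ℝ) : ℂ) := by
    rw [hmv, dotProduct_smul]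
    rw [smul_eq_mul]
    congr 1
    simp only [dotProduct, Pi.star_apply, RCLike.star_def]
    push_cast
    refine Finset.sum_congr rfl fun i _ => ?_
    rw [mul_comm, Complex.mul_conj]
  have h0 := h.re_dotProduct_nonneg u
  rw [hdot] at h0
  have : (0:ℝ) ≤ (r - hM.eigenvalues j) * (∑ i, Complex.normSq (u i)) := by
    simpa [← Complex.ofReal_mul] using h0
  nlinarith

end Herm

open Matrix Finset ComplexOrder Polynomial

section Herm
variable {N : ℕ} {M : Matrix (Fin N) (Fin N) ℂ}

lemma inv_herm_add_smul (hM : M.IsHermitian) {t : ℝ}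
    (hpos : ∀ i, 0 < hM.eigenvalues i + t) :
    (M + (t:ℂ) • 1) * ((hM.eigenvectorUnitary : Matrix (Fin N) (Fin N) ℂ) *
      diagonal (fun i => ((hM.eigenvalues i : ℂ) + t)⁻¹) *
      star (hM.eigenvectorUnitary : Matrix (Fin N) (Fin N) ℂ)) = 1 := by
  have hUs : (hM.eigenvectorUnitary : Matrix (Fin N) (Fin N) ℂ) *
      star (hM.eigenvectorUnitary : Matrix (Fin N) (Fin N) ℂ) = 1 :=
    (Matrix.mem_unitaryGroup_iff).mp hM.eigenvectorUnitary.2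
  have hsU : star (hM.eigenvectorUnitary : Matrix (Fin N) (Fin N) ℂ) *
      (hM.eigenvectorUnitary : Matrix (Fin N) (Fin N) ℂ) = 1 :=
    (Matrix.mem_unitaryGroup_iff').mp hM.eigenvectorUnitary.2
  rw [herm_add_smul hM]
  have hdd : diagonal (fun i => (hM.eigenvalues i : ℂ) + t) *
      diagonal (fun i => ((hM.eigenvalues i : ℂ) + t)⁻¹) = 1 := by
    have hne : ∀ i, ((hM.eigenvalues i : ℂ) + t) ≠ 0 := by
      intro i
      have : ((hM.eigenvalues i : ℂ) + t) = ((hM.eigenvalues i + t : ℝ) : ℂ) := by push_cast; ring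
      rw [this, Complex.ofReal_ne_zero]
      exact (hpos i).ne'
    have hfun : (fun i => ((hM.eigenvalues i : ℂ) + t) * ((hM.eigenvalues i : ℂ) + t)⁻¹)
        = fun _ => (1:ℂ) := funext fun i => mul_inv_cancel₀ (hne i)
    rw [Matrix.diagonal_mul_diagonal, hfun, Matrix.diagonal_one]
  calc ((hM.eigenvectorUnitary : Matrix (Fin N) (Fin N) ℂ) *
        diagonal (fun i => (hM.eigenvalues i : ℂ) + t) *
        star (hM.eigenvectorUnitary : Matrix (Fin N) (Fin N) ℂ)) *
      ((hM.eigenvectorUnitary : Matrix (Fin N) (Fin N) ℂ) *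
        diagonal (fun i => ((hM.eigenvalues i : ℂ) + t)⁻¹) *
        star (hM.eigenvectorUnitary : Matrix (Fin N) (Fin N) ℂ))
      = (hM.eigenvectorUnitary : Matrix (Fin N) (Fin N) ℂ) *
        diagonal (fun i => (hM.eigenvalues i : ℂ) + t) *
        (star (hM.eigenvectorUnitary : Matrix (Fin N) (Fin N) ℂ) *
          (hM.eigenvectorUnitary : Matrix (Fin N) (Fin N) ℂ)) *
        diagonal (fun i => ((hM.eigenvalues i : ℂ) + t)⁻¹) *
        star (hM.eigenvectorUnitary : Matrix (Fin N) (Fin N) ℂ) := by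
        simp only [Matrix.mul_assoc]
    _ = 1 := by
        rw [hsU, Matrix.mul_one,
          Matrix.mul_assoc (hM.eigenvectorUnitary : Matrix (Fin N) (Fin N) ℂ), hdd,
          Matrix.mul_one, hUs]

lemma quadform (U : Matrix (Fin N) (Fin N) ℂ) (hU : U ∈ Matrix.unitaryGroup (Fin N) ℂ)
    (g : Fin N → ℂ) (v : Fin N → ℂ) :
    star v ⬝ᵥ ((U * diagonal g * star U) *ᵥ v)
      = ∑ j, g j * ((Complex.normSq ((star U *ᵥ v) j) : ℝ) : ℂ) := by
  have h1 : (U * diagonal g * star U) *ᵥ v = U *ᵥ (diagonal g *ᵥ (star U *ᵥ v)) := by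
    rw [Matrix.mulVec_mulVec, Matrix.mulVec_mulVec]
  rw [h1, Matrix.dotProduct_mulVec]
  have h2 : Matrix.vecMul (star v) U = star (star U *ᵥ v) := by
    rw [Matrix.star_mulVec, Matrix.star_eq_conjTranspose, Matrix.conjTranspose_conjTranspose]
  rw [h2]
  simp only [dotProduct, Pi.star_apply, Matrix.mulVec_diagonal, RCLike.star_def]
  refine Finset.sum_congr rfl fun j _ => ?_
  rw [← Complex.mul_conj ((star U *ᵥ v) j)]
  ring

end Herm

section Blocks
variable {m : ℕ}

lemma reindex_blocks (W : Matrix (Fin (m+1)) (Fin (m+1)) ℂ) :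
    W.submatrix finSumFinEquiv finSumFinEquiv =
      Matrix.fromBlocks (W.submatrix Fin.castSucc Fin.castSucc)
        (Matrix.of fun i (_ : Fin 1) => W i.castSucc (Fin.last m))
        (Matrix.of fun (_ : Fin 1) j => W (Fin.last m) j.castSucc)
        (Matrix.of fun (_ : Fin 1) (_ : Fin 1) => W (Fin.last m) (Fin.last m)) := by
  have hl : ∀ i : Fin m, finSumFinEquiv (Sum.inl i) = i.castSucc := fun i => by
    rw [finSumFinEquiv_apply_left]; rfl
  have hr : ∀ j : Fin 1, finSumFinEquiv (Sum.inr j) = Fin.last m := fun j => by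
    rw [finSumFinEquiv_apply_right, Fin.eq_zero j]
    ext
    simp
  ext i j
  rcases i with i | i <;> rcases j with j | j <;>
    simp [Matrix.submatrix_apply, hl, hr, Matrix.fromBlocks]

lemma entry_RC (W : Matrix (Fin m) (Fin m) ℂ) (v : Fin m → ℂ) :
    (Matrix.of (fun (_ : Fin 1) j => star (v j)) * W * Matrix.of (fun i (_ : Fin 1) => v i)) 0 0
      = star v ⬝ᵥ (W *ᵥ v) := by
  simp only [Matrix.mul_apply, Matrix.of_apply, dotProduct, Matrix.mulVec, Pi.star_apply]
  simp only [Finset.sum_mul, Finset.mul_sum, mul_assoc]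
  rw [Finset.sum_comm]

end Blocks

section Pointwise
variable {m : ℕ}

lemma pointwise_identity (A : Matrix (Fin (m+1)) (Fin (m+1)) ℂ) (hA : A.IsHermitian) :
    ∃ w : Fin m → ℝ, (∀ j, 0 ≤ w j) ∧ ∀ t : ℝ,
      (∀ j, 0 < (hA.submatrix Fin.castSucc).eigenvalues j + t) →
      ∏ i, (hA.eigenvalues i + t)
        = ((A (Fin.last m) (Fin.last m)).re + t) *
            ∏ j, ((hA.submatrix Fin.castSucc).eigenvalues j + t)
          - ∑ j, w j * ∏ k ∈ univ.erase j, ((hA.submatrix Fin.castSucc).eigenvalues k + t) := by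
  have hB : (A.submatrix Fin.castSucc Fin.castSucc).IsHermitian := hA.submatrix Fin.castSucc
  set μ : Fin m → ℝ := hB.eigenvalues with hμdef
  set U : Matrix (Fin m) (Fin m) ℂ := (hB.eigenvectorUnitary : Matrix (Fin m) (Fin m) ℂ)
    with hUdef
  set v : Fin m → ℂ := fun i => A i.castSucc (Fin.last m) with hvdef
  refine ⟨fun j => Complex.normSq ((star U *ᵥ v) j), fun j => Complex.normSq_nonneg _, ?_⟩
  intro t hμt
  have hprodpos : 0 < ∏ j, (μ j + t) := Finset.prod_pos fun j _ => hμt j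
  have hBdet : det (A.submatrix Fin.castSucc Fin.castSucc + (t:ℂ) • 1)
      = ((∏ j, (μ j + t) : ℝ) : ℂ) := by
    rw [det_herm_add_smul hB]
    push_cast
    rfl
  haveI hInvB : Invertible (A.submatrix Fin.castSucc Fin.castSucc + (t:ℂ) • 1) :=
    Matrix.invertibleOfIsUnitDet _ (by
      rw [hBdet]
      exact isUnit_iff_ne_zero.mpr (Complex.ofReal_ne_zero.mpr hprodpos.ne'))
  have hinvOf : ⅟(A.submatrix Fin.castSucc Fin.castSucc + (t:ℂ) • 1)
      = U * diagonal (fun j => ((μ j : ℂ) + t)⁻¹) * star U :=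
    by rw [Matrix.invOf_eq_nonsing_inv]
       exact Matrix.inv_eq_right_inv (inv_herm_add_smul hB hμt)
  have hX : (A + (t:ℂ) • 1).submatrix Fin.castSucc Fin.castSucc
      = A.submatrix Fin.castSucc Fin.castSucc + (t:ℂ) • 1 := by
    ext i j
    simp [Matrix.submatrix_apply, Matrix.add_apply, Matrix.smul_apply, Matrix.one_apply,
      Fin.castSucc_inj]
  have hCb : (Matrix.of fun i (_ : Fin 1) => (A + (t:ℂ) • 1) i.castSucc (Fin.last m))
      = Matrix.of fun i (_ : Fin 1) => v i := by
    ext i k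
    have hne : i.castSucc ≠ Fin.last m := (Fin.castSucc_lt_last i).ne
    simp [Matrix.add_apply, Matrix.smul_apply, Matrix.one_apply, hne, hvdef]
  have hRb : (Matrix.of fun (_ : Fin 1) j => (A + (t:ℂ) • 1) (Fin.last m) j.castSucc)
      = Matrix.of fun (_ : Fin 1) j => star (v j) := by
    ext k j
    have hne : Fin.last m ≠ j.castSucc := (Fin.castSucc_lt_last j).ne'
    simp only [Matrix.of_apply, Matrix.add_apply, Matrix.smul_apply, Matrix.one_apply,
      if_neg hne, smul_eq_mul, mul_zero, add_zero]
    show A (Fin.last m) j.castSucc = star (A j.castSucc (Fin.last m))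
    exact (hA.apply (Fin.last m) j.castSucc).symm
  have hDb : (A + (t:ℂ) • 1) (Fin.last m) (Fin.last m)
      = ((A (Fin.last m) (Fin.last m)).re : ℂ) + t := by
    rw [Matrix.add_apply]
    congr 1
    · exact (hA.coe_re_apply_self (Fin.last m)).symm
    · simp [Matrix.smul_apply, Matrix.one_apply]
  have hdetA : det (A + (t:ℂ) • 1)
      = ((∏ j, (μ j + t) : ℝ) : ℂ) *
        ((((A (Fin.last m) (Fin.last m)).re : ℂ) + t)
          - ∑ j, (((μ j : ℂ) + t))⁻¹ * ((Complex.normSq ((star U *ᵥ v) j) : ℝ) : ℂ)) := by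
    rw [← Matrix.det_submatrix_equiv_self finSumFinEquiv (A + (t:ℂ) • 1), reindex_blocks,
      hX, hCb, hRb, Matrix.det_fromBlocks₁₁, hBdet]
    congr 1
    rw [Matrix.det_fin_one]
    rw [Matrix.sub_apply, Matrix.of_apply, hDb]
    congr 1
    rw [entry_RC, hinvOf, quadform U hB.eigenvectorUnitary.2]
  have hAdet : det (A + (t:ℂ) • 1) = ((∏ i, (hA.eigenvalues i + t) : ℝ) : ℂ) := by
    rw [det_herm_add_smul hA]
    push_cast
    rfl
  have hmain := hAdet.symm.trans hdetA
  have hreal : ∏ i, (hA.eigenvalues i + t)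
      = (∏ j, (μ j + t)) * (((A (Fin.last m) (Fin.last m)).re + t)
          - ∑ j, (μ j + t)⁻¹ * Complex.normSq ((star U *ᵥ v) j)) := by
    exact_mod_cast hmain
  rw [hreal, mul_sub, Finset.mul_sum]
  congr 1
  · ring
  · refine Finset.sum_congr rfl fun j _ => ?_
    have hne : μ j + t ≠ 0 := (hμt j).ne'
    have hp : ∏ k, (μ k + t) = (μ j + t) * ∏ k ∈ univ.erase j, (μ k + t) :=
      (Finset.mul_prod_erase univ _ (Finset.mem_univ j)).symm
    rw [hp]
    field_simp

end Pointwise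

set_option maxHeartbeats 1600000 in
theorem stmt4 (m α : ℕ) (hα1 : 1 ≤ α) (hαm : α ≤ m)
    (mlo Mhi : ℝ) (h0 : 0 < mlo) (hmM : mlo ≤ Mhi) :
    ∃ c0 > (0:ℝ), ∀ (A : Matrix (Fin (m+1)) (Fin (m+1)) ℂ) (hA : A.PosDef),
      (∀ i, mlo ≤ hA.1.eigenvalues i ∧ hA.1.eigenvalues i ≤ Mhi) →
      esym m m (hA.1.submatrix Fin.castSucc).eigenvalues /
          esym m (m-α) (hA.1.submatrix Fin.castSucc).eigenvalues
        ≥ (1 + c0) *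
            (esym (m+1) (m+1) hA.1.eigenvalues / esym (m+1) (m+1-α) hA.1.eigenvalues) := by
  obtain ⟨β, rfl⟩ : ∃ β, α = β + 1 := ⟨α - 1, (Nat.succ_pred_eq_of_pos hα1).symm⟩
  have hβm : β + 1 ≤ m := hαm
  have hMhi : 0 < Mhi := lt_of_lt_of_le h0 hmM
  have hchoosepos : 0 < ((m.choose (m - (β+1))) : ℝ) := by
    exact_mod_cast Nat.choose_pos (Nat.sub_le m (β+1))
  set D : ℝ := Mhi ^ (m+1) * (((m.choose (m - (β+1))) : ℝ) * Mhi ^ (m - (β+1))) with hD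
  have hDpos : 0 < D := by
    apply mul_pos (pow_pos hMhi _) (mul_pos hchoosepos (pow_pos hMhi _))
  set c0 : ℝ := (mlo ^ m * mlo ^ (m - β)) / D with hc0
  have hc0pos : 0 < c0 := div_pos (mul_pos (pow_pos h0 _) (pow_pos h0 _)) hDpos
  refine ⟨c0, hc0pos, ?_⟩
  intro A hA hbounds
  have hlamlo : ∀ i, mlo ≤ hA.1.eigenvalues i := fun i => (hbounds i).1
  have hlamhi : ∀ i, hA.1.eigenvalues i ≤ Mhi := fun i => (hbounds i).2
  set μ : Fin m → ℝ := (hA.1.submatrix Fin.castSucc).eigenvalues with hμeq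
  -- eigenvalue bounds for the submatrix
  have hPSD1 : (A - (mlo:ℂ) • 1).PosSemidef := posSemidef_sub_smul hA.1 hlamlo
  have hPSD2 : ((Mhi:ℂ) • 1 - A).PosSemidef := posSemidef_smul_sub hA.1 hlamhi
  have hsub1 : (A - (mlo:ℂ) • 1).submatrix Fin.castSucc Fin.castSucc
      = A.submatrix Fin.castSucc Fin.castSucc - (mlo:ℂ) • 1 := by
    ext i j
    simp [Matrix.submatrix_apply, Matrix.sub_apply, Matrix.smul_apply, Matrix.one_apply,
      Fin.castSucc_inj]
  have hsub2 : ((Mhi:ℂ) • 1 - A).submatrix Fin.castSucc Fin.castSucc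
      = (Mhi:ℂ) • 1 - A.submatrix Fin.castSucc Fin.castSucc := by
    ext i j
    simp [Matrix.submatrix_apply, Matrix.sub_apply, Matrix.smul_apply, Matrix.one_apply,
      Fin.castSucc_inj]
  have hμlo : ∀ j, mlo ≤ μ j := by
    intro j
    have h1 := hPSD1.submatrix Fin.castSucc
    rw [hsub1] at h1
    exact eig_ge_of_psd (hA.1.submatrix Fin.castSucc) h1 j
  have hμhi : ∀ j, μ j ≤ Mhi := by
    intro j
    have h1 := hPSD2.submatrix Fin.castSucc
    rw [hsub2] at h1
    exact eig_le_of_psd (hA.1.submatrix Fin.castSucc) h1 j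
  have hμ0 : ∀ j, (0:ℝ) ≤ μ j := fun j => le_trans h0.le (hμlo j)
  -- the polynomial identity
  obtain ⟨w, hw0, hid⟩ := pointwise_identity A hA.1
  simp only [← hμeq] at hid
  set ar : ℝ := (A (Fin.last m) (Fin.last m)).re with hareq
  set P : Polynomial ℝ := ∏ i : Fin (m+1), (X + C (hA.1.eigenvalues i)) with hP
  set Q : Polynomial ℝ := ∏ j : Fin m, (X + C (μ j)) with hQ
  set R : Fin m → Polynomial ℝ := fun j => ∏ k ∈ univ.erase j, (X + C (μ k)) with hR
  have hPQ : P = (X + C ar) * Q - ∑ j, C (w j) * R j := by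
    apply Polynomial.eq_of_infinite_eval_eq
    apply Set.Infinite.mono ?_ (Set.Ioi_infinite (0:ℝ))
    intro x hx
    have hx0 : (0:ℝ) < x := hx
    have hμx : ∀ j, 0 < μ j + x := fun j => by have := hμlo j; linarith
    have hidx := hid x hμx
    simp only [Set.mem_setOf_eq, hP, hQ, hR, Polynomial.eval_sub, Polynomial.eval_mul,
      Polynomial.eval_add, Polynomial.eval_X, Polynomial.eval_C, Polynomial.eval_prod,
      Polynomial.eval_finset_sum]
    simp only [add_comm x]
    exact hidx
  have hcoeff : ∀ k, P.coeff k = ((X + C ar) * Q).coeff k - ∑ j, w j * (R j).coeff k := by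
    intro k
    rw [hPQ, Polynomial.coeff_sub, Polynomial.finset_sum_coeff]
    simp only [Polynomial.coeff_C_mul]
  have hXCQ : ∀ k, ((X + C ar) * Q).coeff (k+1) = Q.coeff k + ar * Q.coeff (k+1) := by
    intro k
    rw [add_mul, Polynomial.coeff_add, Polynomial.coeff_X_mul, Polynomial.coeff_C_mul]
  have hXCQ0 : ((X + C ar) * Q).coeff 0 = ar * Q.coeff 0 := by
    rw [add_mul, Polynomial.coeff_add, Polynomial.coeff_C_mul, Polynomial.mul_coeff_zero,
      Polynomial.coeff_X_zero, zero_mul, zero_add]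
  have hQR : ∀ j : Fin m, Q = (X + C (μ j)) * R j := fun j =>
    (Finset.mul_prod_erase univ _ (Finset.mem_univ j)).symm
  have hRnn : ∀ (j : Fin m) (k : ℕ), 0 ≤ (R j).coeff k := fun j k =>
    coeff_prod_nonneg _ _ (fun i _ => hμ0 i) k
  have key : Q.coeff 0 * P.coeff (β+1) ≥ P.coeff 0 * Q.coeff (β+1) + Q.coeff 0 * Q.coeff β := by
    have e1 := hcoeff (β+1)
    have e2 := hcoeff 0
    rw [hXCQ β] at e1
    rw [hXCQ0] at e2
    have per : ∀ j : Fin m, Q.coeff 0 * (w j * (R j).coeff (β+1))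
        ≤ (w j * (R j).coeff 0) * Q.coeff (β+1) := by
      intro j
      have hq1 : Q.coeff (β+1) = (R j).coeff β + μ j * (R j).coeff (β+1) := by
        rw [hQR j, add_mul, Polynomial.coeff_add, Polynomial.coeff_X_mul,
          Polynomial.coeff_C_mul]
      have hq0 : Q.coeff 0 = μ j * (R j).coeff 0 := by
        rw [hQR j, add_mul, Polynomial.coeff_add, Polynomial.coeff_C_mul,
          Polynomial.mul_coeff_zero, Polynomial.coeff_X_zero, zero_mul, zero_add]
      rw [hq1, hq0]
      have h1 := hRnn j 0
      have h2 := hRnn j β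
      have h3 := hw0 j
      nlinarith [mul_nonneg (mul_nonneg h3 h1) h2]
    have hsum : ∑ j, Q.coeff 0 * (w j * (R j).coeff (β+1))
        ≤ ∑ j, (w j * (R j).coeff 0) * Q.coeff (β+1) :=
      Finset.sum_le_sum fun j _ => per j
    have expand1 : (ar * Q.coeff 0 - ∑ j, w j * (R j).coeff 0) * Q.coeff (β+1)
        = ar * Q.coeff 0 * Q.coeff (β+1) - ∑ j, (w j * (R j).coeff 0) * Q.coeff (β+1) := by
      rw [sub_mul, Finset.sum_mul]
    have expand2 : Q.coeff 0 * (Q.coeff β + ar * Q.coeff (β+1) - ∑ j, w j * (R j).coeff (β+1))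
        = Q.coeff 0 * Q.coeff β + ar * Q.coeff 0 * Q.coeff (β+1)
          - ∑ j, Q.coeff 0 * (w j * (R j).coeff (β+1)) := by
      rw [mul_sub, Finset.mul_sum, mul_add]
      ring_nf
    rw [ge_iff_le, e1, e2, expand1, expand2]
    linarith [hsum]
  -- translate coefficients to esym
  have hidx1 : m + 1 - (β+1) = m - β := by omega
  have hP1 : P.coeff (β+1) = esym (m+1) (m - β) hA.1.eigenvalues := by
    rw [hP, coeff_prod_esym (m+1) (β+1) (by omega), hidx1]
  have hP0 : P.coeff 0 = esym (m+1) (m+1) hA.1.eigenvalues := by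
    rw [hP, coeff_prod_esym (m+1) 0 (by omega), Nat.sub_zero]
  have hQ1 : Q.coeff (β+1) = esym m (m - (β+1)) μ := by
    rw [hQ, coeff_prod_esym m (β+1) hβm]
  have hQβ2 : Q.coeff β = esym m (m - β) μ := by
    rw [hQ, coeff_prod_esym m β (by omega)]
  have hQ0 : Q.coeff 0 = esym m m μ := by
    rw [hQ, coeff_prod_esym m 0 (by omega), Nat.sub_zero]
  rw [hP1, hP0, hQ1, hQβ2, hQ0] at key
  -- numerical bounds
  have hdB : mlo ^ m ≤ esym m m μ := by
    rw [esym_self]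
    calc mlo ^ m = ∏ _j : Fin m, mlo := by rw [Finset.prod_const, Finset.card_univ]; simp
      _ ≤ ∏ j, μ j := Finset.prod_le_prod (fun _ _ => h0.le) (fun j _ => hμlo j)
  have hdBpos : 0 < esym m m μ := lt_of_lt_of_le (pow_pos h0 m) hdB
  have hq' : mlo ^ (m - β) ≤ esym m (m - β) μ := by
    have h1 := esym_ge m (m - β) μ mlo h0.le hμlo
    have h2 : (1:ℝ) ≤ (m.choose (m - β) : ℝ) := by
      exact_mod_cast Nat.one_le_iff_ne_zero.mpr (Nat.choose_pos (Nat.sub_le m β)).ne'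
    nlinarith [pow_pos h0 (m - β)]
  have hqup : esym m (m - (β+1)) μ ≤ ((m.choose (m - (β+1))) : ℝ) * Mhi ^ (m - (β+1)) :=
    esym_le m (m - (β+1)) (Nat.sub_le _ _) μ Mhi hμ0 (fun j => hμhi j)
  have hqpos : 0 < esym m (m - (β+1)) μ := by
    have h1 := esym_ge m (m - (β+1)) μ mlo h0.le hμlo
    nlinarith [pow_pos h0 (m - (β+1))]
  have hdA : esym (m+1) (m+1) hA.1.eigenvalues ≤ Mhi ^ (m+1) := by
    rw [esym_self]
    calc ∏ i, hA.1.eigenvalues i ≤ ∏ _i : Fin (m+1), Mhi :=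
          Finset.prod_le_prod (fun i _ => le_trans h0.le (hlamlo i)) (fun i _ => hlamhi i)
      _ = Mhi ^ (m+1) := by rw [Finset.prod_const, Finset.card_univ]; simp
  have hdApos : 0 < esym (m+1) (m+1) hA.1.eigenvalues := by
    rw [esym_self]
    exact Finset.prod_pos fun i _ => lt_of_lt_of_le h0 (hlamlo i)
  have hppos : 0 < esym (m+1) (m - β) hA.1.eigenvalues := by
    have h1 := esym_ge (m+1) (m - β) hA.1.eigenvalues mlo h0.le hlamlo
    have h2 : 0 < (((m+1).choose (m - β)) : ℝ) := by
      exact_mod_cast Nat.choose_pos (by omega : m - β ≤ m+1)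
    nlinarith [pow_pos h0 (m - β)]
  -- final algebra
  rw [ge_iff_le, hidx1, ← mul_div_assoc, div_le_div_iff₀ hppos hqpos]
  have hc0b : c0 * (esym (m+1) (m+1) hA.1.eigenvalues * esym m (m - (β+1)) μ)
      ≤ esym m m μ * esym m (m - β) μ := by
    have h1 : esym (m+1) (m+1) hA.1.eigenvalues * esym m (m - (β+1)) μ ≤ D := by
      rw [hD]
      exact mul_le_mul hdA hqup hqpos.le (by positivity)
    have h2 : c0 * D = mlo ^ m * mlo ^ (m - β) := by
      rw [hc0]
      field_simp
    calc c0 * (esym (m+1) (m+1) hA.1.eigenvalues * esym m (m - (β+1)) μ)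
        ≤ c0 * D := mul_le_mul_of_nonneg_left h1 hc0pos.le
      _ = mlo ^ m * mlo ^ (m - β) := h2
      _ ≤ esym m m μ * esym m (m - β) μ :=
          mul_le_mul hdB hq' (pow_pos h0 _).le hdBpos.le
  have hexp : (1 + c0) * esym (m+1) (m+1) hA.1.eigenvalues * esym m (m - (β+1)) μ
      = esym (m+1) (m+1) hA.1.eigenvalues * esym m (m - (β+1)) μ
        + c0 * (esym (m+1) (m+1) hA.1.eigenvalues * esym m (m - (β+1)) μ) := by
    ring
  linarith [key, hc0b, hexp]
end

section
/- Fix integers n ≥ 2 and 1 ≤ α ≤ n and λ ∈ ℝ^n with all λ_i > 0. Setting μ_i = 1/λ_i, for any vector (a_1,…,a_n) of complex n-vectors a_i = (a_{i1},…,a_{in}) ∈ ℂ^n, one has ∑_i S_{α-1;i}(μ) μ_i³ ⟨a_i, a_i⟩ + ∑_{i≠j} S_{α-2;ij}(μ) μ_i² μ_j² ∑_l a_{il} \overline{a_{jl}} ≥ 0, where ⟨a_i,a_i⟩ = ∑_l |a_{il}|². (This is inequality (3.4) of the paper with ξ_i^{(l)} = μ_i² a_{il}, summed over l.) -/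
open Finset

lemma upd_sum (n k : ℕ) (s : Finset (Fin n)) (ν : Fin n → ℝ) (i : Fin n) :
    ∑ T ∈ s.powersetCard k, ∏ t ∈ T, Function.update ν i 0 t
      = ∑ T ∈ (s.erase i).powersetCard k, ∏ t ∈ T, ν t := by
  rw [← Finset.sum_filter_add_sum_filter_not (s.powersetCard k) (fun T => i ∈ T)]
  have h1 : ∑ T ∈ (s.powersetCard k).filter (fun T => i ∈ T),
      ∏ t ∈ T, Function.update ν i 0 t = 0 := by
    apply Finset.sum_eq_zero
    intro T hT
    simp only [Finset.mem_filter] at hT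
    exact Finset.prod_eq_zero hT.2 (by simp)
  rw [h1, zero_add]
  have h2 : (s.powersetCard k).filter (fun T => ¬ i ∈ T) = (s.erase i).powersetCard k := by
    ext T
    simp only [Finset.mem_filter, Finset.mem_powersetCard, Finset.subset_erase]
    tauto
  rw [h2]
  apply Finset.sum_congr rfl
  intro T hT
  simp only [Finset.mem_powersetCard, Finset.subset_erase] at hT
  apply Finset.prod_congr rfl
  intro t ht
  exact Function.update_of_ne (by rintro rfl; exact hT.1.2 ht) _ _

lemma bij1 (n α : ℕ) (hα : 1 ≤ α) (μ : Fin n → ℝ) (i : Fin n) :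
    ∑ T ∈ ((univ : Finset (Fin n)).erase i).powersetCard (α-1), (∏ t ∈ T, μ t) * μ i
      = ∑ S ∈ ((univ : Finset (Fin n)).powersetCard α).filter (fun S => i ∈ S),
          ∏ t ∈ S, μ t := by
  apply Finset.sum_nbij' (fun T => insert i T) (fun S => S.erase i)
  · intro T hT
    simp only [Finset.mem_powersetCard, Finset.subset_erase] at hT
    simp only [Finset.mem_filter, Finset.mem_powersetCard]
    refine ⟨⟨Finset.subset_univ _, ?_⟩, Finset.mem_insert_self _ _⟩
    rw [Finset.card_insert_of_notMem hT.1.2, hT.2]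
    omega
  · intro S hS
    simp only [Finset.mem_filter, Finset.mem_powersetCard] at hS
    simp only [Finset.mem_powersetCard, Finset.subset_erase]
    refine ⟨⟨Finset.subset_univ _, Finset.notMem_erase _ _⟩, ?_⟩
    rw [Finset.card_erase_of_mem hS.2, hS.1.2]
  · intro T hT
    simp only [Finset.mem_powersetCard, Finset.subset_erase] at hT
    exact Finset.erase_insert hT.1.2
  · intro S hS
    simp only [Finset.mem_filter] at hS
    exact Finset.insert_erase hS.2
  · intro T hT
    simp only [Finset.mem_powersetCard, Finset.subset_erase] at hT
    rw [Finset.prod_insert hT.1.2, mul_comm]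

lemma bij2 (n α : ℕ) (hα : 2 ≤ α) (μ : Fin n → ℝ) (i j : Fin n) (hij : j ≠ i) :
    ∑ T ∈ (((univ : Finset (Fin n)).erase i).erase j).powersetCard (α-2),
        (∏ t ∈ T, μ t) * (μ i * μ j)
      = ∑ S ∈ ((univ : Finset (Fin n)).powersetCard α).filter (fun S => i ∈ S ∧ j ∈ S),
          ∏ t ∈ S, μ t := by
  apply Finset.sum_nbij' (fun T => insert i (insert j T)) (fun S => (S.erase i).erase j)
  · intro T hT
    simp only [Finset.mem_powersetCard, Finset.subset_erase] at hT
    obtain ⟨⟨⟨_, hiT⟩, hjT⟩, hcard⟩ := hT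
    simp only [Finset.mem_filter, Finset.mem_powersetCard]
    refine ⟨⟨Finset.subset_univ _, ?_⟩, Finset.mem_insert_self _ _,
      Finset.mem_insert_of_mem (Finset.mem_insert_self _ _)⟩
    rw [Finset.card_insert_of_notMem (by simp [hij.symm, hiT]),
      Finset.card_insert_of_notMem hjT, hcard]
    omega
  · intro S hS
    simp only [Finset.mem_filter, Finset.mem_powersetCard] at hS
    simp only [Finset.mem_powersetCard, Finset.subset_erase]
    refine ⟨⟨⟨Finset.subset_univ _,
        fun h => Finset.notMem_erase i S (Finset.mem_of_mem_erase h)⟩,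
        Finset.notMem_erase _ _⟩, ?_⟩
    rw [Finset.card_erase_of_mem (Finset.mem_erase.mpr ⟨hij, hS.2.2⟩),
        Finset.card_erase_of_mem hS.2.1, hS.1.2]
    omega
  · intro T hT
    simp only [Finset.mem_powersetCard, Finset.subset_erase] at hT
    obtain ⟨⟨⟨_, hiT⟩, hjT⟩, _⟩ := hT
    rw [Finset.erase_insert (by simp [hij.symm, hiT]), Finset.erase_insert hjT]
  · intro S hS
    simp only [Finset.mem_filter] at hS
    rw [Finset.insert_erase (Finset.mem_erase.mpr ⟨hij, hS.2.2⟩), Finset.insert_erase hS.2.1]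
  · intro T hT
    simp only [Finset.mem_powersetCard, Finset.subset_erase] at hT
    obtain ⟨⟨⟨_, hiT⟩, hjT⟩, _⟩ := hT
    rw [Finset.prod_insert (by simp [hij.symm, hiT]), Finset.prod_insert hjT]
    ring

lemma erase_comm'' {β : Type*} [DecidableEq β] (s : Finset β) (i j : β) :
    (s.erase j).erase i = (s.erase i).erase j := by
  ext x
  simp only [Finset.mem_erase]
  tauto

lemma per_l {n : ℕ} (S : Finset (Fin n)) (μ : Fin n → ℝ) (b : Fin n → ℂ) :
    Complex.normSq (∑ i ∈ S, (μ i : ℂ) * b i)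
      = ∑ i ∈ S, μ i ^ 2 * Complex.normSq (b i)
        + ∑ i ∈ S, ∑ j ∈ S.erase i, μ i * μ j * (b i * (starRingEnd ℂ) (b j)).re := by
  have key : ((∑ i ∈ S, (μ i:ℂ) * b i) * (starRingEnd ℂ) (∑ i ∈ S, (μ i:ℂ) * b i))
      = ∑ i ∈ S, (((μ i:ℂ))^2 * (b i * (starRingEnd ℂ) (b i)))
        + ∑ i ∈ S, ∑ j ∈ S.erase i, ((μ i:ℂ) * (μ j:ℂ) * (b i * (starRingEnd ℂ) (b j))) := by
    rw [map_sum, Finset.sum_mul_sum, ← Finset.sum_add_distrib]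
    apply Finset.sum_congr rfl
    intro i hi
    rw [← Finset.add_sum_erase _ _ hi]
    congr 1
    · simp only [map_mul, Complex.conj_ofReal]; ring
    · apply Finset.sum_congr rfl
      intro j _
      simp only [map_mul, Complex.conj_ofReal]; ring
  have h1 := congrArg Complex.re key
  rw [Complex.mul_conj, Complex.ofReal_re] at h1
  rw [h1, Complex.add_re, Complex.re_sum, Complex.re_sum]
  congr 1
  · apply Finset.sum_congr rfl
    intro i _
    rw [Complex.mul_conj,
      show ((μ i:ℂ)^2 * ((Complex.normSq (b i) : ℝ):ℂ))
        = ((μ i^2 * Complex.normSq (b i) : ℝ):ℂ) by push_cast; ring,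
      Complex.ofReal_re]
  · apply Finset.sum_congr rfl
    intro i _
    rw [Complex.re_sum]
    apply Finset.sum_congr rfl
    intro j _
    rw [show ((μ i:ℂ) * (μ j:ℂ) * (b i * (starRingEnd ℂ) (b j)))
        = ((μ i * μ j : ℝ) : ℂ) * (b i * (starRingEnd ℂ) (b j)) by push_cast; ring]
    rw [Complex.re_ofReal_mul]

theorem stmt7 (n α : ℕ) (hn : 2 ≤ n) (hα : 2 ≤ α) (hαn : α ≤ n)
    (lam μ : Fin n → ℝ) (hlam : ∀ i, 0 < lam i) (hμ : ∀ i, μ i = 1 / lam i)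
    (a : Fin n → Fin n → ℂ) :
    ∑ i, esym n (α-1) (Function.update μ i 0) * μ i ^ 3 * (∑ l, Complex.normSq (a i l))
      + (∑ i, ∑ j ∈ univ.filter (fun j => j ≠ i),
          (esym n (α-2) (Function.update (Function.update μ i 0) j 0) : ℂ)
            * (μ i : ℂ)^2 * (μ j : ℂ)^2 * ∑ l, a i l * star (a j l)).re
      ≥ 0 := by
  have hμpos : ∀ i, 0 < μ i := fun i => by rw [hμ i]; exact one_div_pos.mpr (hlam i)
  set Pα := (univ : Finset (Fin n)).powersetCard α with hPα
  -- Step 1: the real part of the complex double sum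
  have hre : (∑ i, ∑ j ∈ univ.filter (fun j => j ≠ i),
          (esym n (α-2) (Function.update (Function.update μ i 0) j 0) : ℂ)
            * (μ i : ℂ)^2 * (μ j : ℂ)^2 * ∑ l, a i l * star (a j l)).re
      = ∑ i, ∑ j ∈ univ.filter (fun j => j ≠ i),
          (esym n (α-2) (Function.update (Function.update μ i 0) j 0) * μ i ^ 2 * μ j ^ 2)
            * (∑ l, a i l * star (a j l)).re := by
    rw [Complex.re_sum]
    apply Finset.sum_congr rfl
    intro i _
    rw [Complex.re_sum]
    apply Finset.sum_congr rfl
    intro j _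
    rw [show ((esym n (α-2) (Function.update (Function.update μ i 0) j 0) : ℂ)
            * (μ i : ℂ)^2 * (μ j : ℂ)^2 * ∑ l, a i l * star (a j l))
        = ((esym n (α-2) (Function.update (Function.update μ i 0) j 0) * μ i ^ 2 * μ j ^ 2 : ℝ) : ℂ)
            * ∑ l, a i l * star (a j l) by push_cast; ring,
      Complex.re_ofReal_mul]
  rw [hre]
  -- Step 2: rewrite the coefficients as sums over α-subsets
  have hc1 : ∀ i : Fin n,
      esym n (α-1) (Function.update μ i 0) * μ i ^ 3 * (∑ l, Complex.normSq (a i l))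
        = ∑ S ∈ Pα.filter (fun S => i ∈ S),
            (∏ t ∈ S, μ t) * (μ i ^ 2 * ∑ l, Complex.normSq (a i l)) := by
    intro i
    have hb := bij1 n α (by omega) μ i
    calc esym n (α-1) (Function.update μ i 0) * μ i ^ 3 * (∑ l, Complex.normSq (a i l))
        = (∑ T ∈ ((univ : Finset (Fin n)).erase i).powersetCard (α-1), (∏ t ∈ T, μ t) * μ i)
            * (μ i ^ 2 * ∑ l, Complex.normSq (a i l)) := by
          rw [esym, upd_sum n (α-1) univ μ i, ← Finset.sum_mul]; ring
      _ = (∑ S ∈ Pα.filter (fun S => i ∈ S), ∏ t ∈ S, μ t)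
            * (μ i ^ 2 * ∑ l, Complex.normSq (a i l)) := by rw [hb]
      _ = _ := Finset.sum_mul _ _ _
  have hc2 : ∀ i j : Fin n, j ≠ i →
      (esym n (α-2) (Function.update (Function.update μ i 0) j 0) * μ i ^ 2 * μ j ^ 2)
          * (∑ l, a i l * star (a j l)).re
        = ∑ S ∈ Pα.filter (fun S => i ∈ S ∧ j ∈ S),
            (∏ t ∈ S, μ t) * (μ i * μ j * (∑ l, a i l * star (a j l)).re) := by
    intro i j hij
    have hb := bij2 n α hα μ i j hij
    calc (esym n (α-2) (Function.update (Function.update μ i 0) j 0) * μ i ^ 2 * μ j ^ 2)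
          * (∑ l, a i l * star (a j l)).re
        = (∑ T ∈ (((univ : Finset (Fin n)).erase i).erase j).powersetCard (α-2),
              (∏ t ∈ T, μ t) * (μ i * μ j))
            * (μ i * μ j * (∑ l, a i l * star (a j l)).re) := by
          rw [esym, upd_sum n (α-2) univ (Function.update μ i 0) j,
            upd_sum n (α-2) (univ.erase j) μ i, erase_comm'', ← Finset.sum_mul]
          ring
      _ = (∑ S ∈ Pα.filter (fun S => i ∈ S ∧ j ∈ S), ∏ t ∈ S, μ t)
            * (μ i * μ j * (∑ l, a i l * star (a j l)).re) := by rw [hb]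
      _ = _ := Finset.sum_mul _ _ _
  rw [Finset.sum_congr rfl (fun i _ => hc1 i),
    Finset.sum_congr rfl (fun i _ => Finset.sum_congr rfl
      (fun j hj => hc2 i j (by simpa using hj)))]
  -- Step 3: exchange orders of summation
  rw [Finset.sum_comm' (t' := Pα) (s' := fun S => S)
    (by intro x y; simp [hPα, Finset.mem_powersetCard]; tauto)]
  have hswap2 : ∑ i, ∑ j ∈ univ.filter (fun j => j ≠ i),
      ∑ S ∈ Pα.filter (fun S => i ∈ S ∧ j ∈ S),
        (∏ t ∈ S, μ t) * (μ i * μ j * (∑ l, a i l * star (a j l)).re)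
      = ∑ S ∈ Pα, ∑ i ∈ S, ∑ j ∈ S.erase i,
          (∏ t ∈ S, μ t) * (μ i * μ j * (∑ l, a i l * star (a j l)).re) := by
    have inner : ∀ i : Fin n, ∑ j ∈ univ.filter (fun j => j ≠ i),
        ∑ S ∈ Pα.filter (fun S => i ∈ S ∧ j ∈ S),
          (∏ t ∈ S, μ t) * (μ i * μ j * (∑ l, a i l * star (a j l)).re)
        = ∑ S ∈ Pα.filter (fun S => i ∈ S), ∑ j ∈ S.erase i,
            (∏ t ∈ S, μ t) * (μ i * μ j * (∑ l, a i l * star (a j l)).re) := by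
      intro i
      apply Finset.sum_comm' (t' := Pα.filter (fun S => i ∈ S)) (s' := fun S => S.erase i)
      intro j S
      simp only [Finset.mem_filter, Finset.mem_univ, true_and, Finset.mem_erase]
      tauto
    rw [Finset.sum_congr rfl (fun i _ => inner i)]
    apply Finset.sum_comm' (t' := Pα) (s' := fun S => S)
    intro i S
    simp only [Finset.mem_filter, Finset.mem_univ, true_and]
    tauto
  rw [hswap2, ← Finset.sum_add_distrib]
  -- Step 4: positivity of each summand
  apply Finset.sum_nonneg
  intro S hS
  have hP : 0 < ∏ t ∈ S, μ t := Finset.prod_pos (fun t _ => hμpos t)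
  have hkey : ∀ l : Fin n,
      Complex.normSq (∑ i ∈ S, (μ i : ℂ) * a i l)
        = ∑ i ∈ S, μ i ^ 2 * Complex.normSq (a i l)
          + ∑ i ∈ S, ∑ j ∈ S.erase i, μ i * μ j * (a i l * (starRingEnd ℂ) (a j l)).re :=
    fun l => per_l S μ (fun i => a i l)
  have hsum : ∑ i ∈ S, (∏ t ∈ S, μ t) * (μ i ^ 2 * ∑ l, Complex.normSq (a i l))
      + ∑ i ∈ S, ∑ j ∈ S.erase i,
          (∏ t ∈ S, μ t) * (μ i * μ j * (∑ l, a i l * star (a j l)).re)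
      = (∏ t ∈ S, μ t) * ∑ l, Complex.normSq (∑ i ∈ S, (μ i : ℂ) * a i l) := by
    rw [← Finset.mul_sum]
    simp_rw [← Finset.mul_sum]
    rw [← mul_add]
    congr 1
    simp_rw [hkey, Finset.sum_add_distrib]
    congr 1
    · rw [Finset.sum_comm]
      apply Finset.sum_congr rfl
      intro i _
      rw [Finset.mul_sum]
    · rw [Finset.sum_comm]
      apply Finset.sum_congr rfl
      intro i _
      rw [Finset.sum_comm]
      apply Finset.sum_congr rfl
      intro j _
      rw [Complex.re_sum, Finset.mul_sum]
      apply Finset.sum_congr rfl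
      intro l _
      rw [starRingEnd_apply]
  rw [hsum]
  exact mul_nonneg hP.le (Finset.sum_nonneg fun l _ => Complex.normSq_nonneg _)
end

section
/- Fix integers n ≥ 2, 2 ≤ α ≤ n, ψ > 0, and K > 0. Suppose μ ∈ ℝ^n satisfies μ_i > 0 for all i, S_α(μ) = C(n,α)/ψ' for some ψ' ≥ ψ, and S_{α-1;i}(μ)·μ_i² ≤ K for every i, where μ_1 ≥ μ_2 ≥ ⋯ ≥ μ_n. Then μ_1 ≤ K ψ' and consequently S_{α-1;i}(μ) ≤ C(n,α-1)·(Kψ')^{α-1} for all i. -/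
open Finset

private lemma le_strictMono {m n : ℕ} {f : Fin m → Fin n} (hf : StrictMono f) :
    ∀ j, ∀ k : Fin m, (k : ℕ) = j → j ≤ (f k : ℕ) := by
  intro j
  induction j with
  | zero => intro k _; omega
  | succ j ih =>
    intro k hk
    have hj : j < m := by omega
    have h1 : (⟨j, hj⟩ : Fin m) < k := by simp [Fin.lt_def]; omega
    have h2 := hf h1
    have h3 := ih ⟨j, hj⟩ rfl
    rw [Fin.lt_def] at h2
    omega

theorem stmt9 (n α : ℕ) (hn : 2 ≤ n) (hα : 2 ≤ α) (hαn : α ≤ n)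
    (ψ ψ' K : ℝ) (hψ : 0 < ψ) (hψ' : ψ ≤ ψ') (hK : 0 < K)
    (μ : Fin n → ℝ) (hpos : ∀ i, 0 < μ i)
    (hanti : ∀ i j : Fin n, i ≤ j → μ j ≤ μ i)
    (heq : esym n α μ = (n.choose α : ℝ) / ψ')
    (hbd : ∀ i, esym n (α-1) (Function.update μ i 0) * μ i ^ 2 ≤ K) :
    μ ⟨0, by omega⟩ ≤ K * ψ' ∧
      ∀ i, esym n (α-1) (Function.update μ i 0)
        ≤ (n.choose (α-1) : ℝ) * (K * ψ') ^ (α-1) := by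
  set i0 : Fin n := ⟨0, by omega⟩ with hi0
  have hψ'0 : 0 < ψ' := lt_of_lt_of_le hψ hψ'
  have hmax : ∀ i, μ i ≤ μ i0 := fun i => hanti i0 i (show (i0 : ℕ) ≤ i from Nat.zero_le _)
  have hμ0 : 0 < μ i0 := hpos i0
  -- the top set T0 = image of castLE
  set T0 : Finset (Fin n) := univ.map (Fin.castLEEmb hαn) with hT0
  have hT0card : T0.card = α := by simp [hT0]
  -- any α-set's product is at most T0's product
  have hprodS : ∀ S ∈ (univ : Finset (Fin n)).powersetCard α, ∏ i ∈ S, μ i ≤ ∏ i ∈ T0, μ i := by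
    intro S hS
    rw [mem_powersetCard] at hS
    obtain ⟨-, hScard⟩ := hS
    have hSmap : univ.map (S.orderEmbOfFin hScard).toEmbedding = S := by
      apply Finset.eq_of_subset_of_card_le
      · intro x hx
        rw [Finset.mem_map] at hx
        obtain ⟨k, -, hk⟩ := hx
        rw [← hk]
        exact S.orderEmbOfFin_mem hScard k
      · simp [hScard]
    rw [← hSmap, hT0, Finset.prod_map, Finset.prod_map]
    apply Finset.prod_le_prod
    · intro k _; exact le_of_lt (hpos _)
    · intro k _
      apply hanti
      rw [Fin.le_def]
      simpa using le_strictMono (S.orderEmbOfFin hScard).strictMono k k rfl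
  have hprodT0pos : 0 < ∏ i ∈ T0, μ i := Finset.prod_pos (fun i _ => hpos i)
  have hsum : esym n α μ ≤ (n.choose α : ℝ) * ∏ i ∈ T0, μ i := by
    rw [esym]
    calc ∑ S ∈ (univ : Finset (Fin n)).powersetCard α, ∏ i ∈ S, μ i
        ≤ ∑ S ∈ (univ : Finset (Fin n)).powersetCard α, ∏ i ∈ T0, μ i :=
          Finset.sum_le_sum hprodS
      _ = (n.choose α : ℝ) * ∏ i ∈ T0, μ i := by
          rw [Finset.sum_const, Finset.card_powersetCard, card_univ, Fintype.card_fin,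
            nsmul_eq_mul]
  have hchoose : (0 : ℝ) < (n.choose α : ℝ) := by
    exact_mod_cast Nat.choose_pos hαn
  have hinv : 1 / ψ' ≤ ∏ i ∈ T0, μ i := by
    rw [heq] at hsum
    rw [div_le_iff₀ hψ'0] at hsum ⊢
    nlinarith
  have hi0T0 : i0 ∈ T0 := by
    rw [hT0]
    simp only [mem_map, mem_univ, true_and]
    exact ⟨⟨0, by omega⟩, rfl⟩
  -- the erased product is a term in esym (α-1) (update μ i0 0)
  have herase : ∏ i ∈ T0.erase i0, μ i ≤ esym n (α-1) (Function.update μ i0 0) := by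
    rw [esym]
    have hmem : T0.erase i0 ∈ (univ : Finset (Fin n)).powersetCard (α-1) := by
      rw [mem_powersetCard]
      refine ⟨subset_univ _, ?_⟩
      rw [Finset.card_erase_of_mem hi0T0, hT0card]
    have heqprod : ∏ i ∈ T0.erase i0, Function.update μ i0 0 i = ∏ i ∈ T0.erase i0, μ i := by
      apply Finset.prod_congr rfl
      intro i hi
      rw [Function.update_of_ne (Finset.ne_of_mem_erase hi)]
    rw [← heqprod]
    apply Finset.single_le_sum (f := fun T => ∏ i ∈ T, Function.update μ i0 0 i) _ hmem
    intro T _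
    apply Finset.prod_nonneg
    intro i _
    rcases eq_or_ne i i0 with h | h
    · rw [h, Function.update_self]
    · rw [Function.update_of_ne h]; exact le_of_lt (hpos i)
  have key : μ i0 ≤ K * ψ' := by
    have h1 : μ i0 * (1/ψ') ≤ μ i0 * ∏ i ∈ T0, μ i :=
      mul_le_mul_of_nonneg_left hinv (le_of_lt hμ0)
    have h2 : μ i0 * ∏ i ∈ T0, μ i = μ i0 ^ 2 * ∏ i ∈ T0.erase i0, μ i := by
      rw [← Finset.mul_prod_erase T0 μ hi0T0]; ring
    have h3 : μ i0 ^ 2 * ∏ i ∈ T0.erase i0, μ i ≤ K := by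
      calc μ i0 ^ 2 * ∏ i ∈ T0.erase i0, μ i
          ≤ μ i0 ^ 2 * esym n (α-1) (Function.update μ i0 0) := by
            apply mul_le_mul_of_nonneg_left herase (by positivity)
        _ = esym n (α-1) (Function.update μ i0 0) * μ i0 ^ 2 := by ring
        _ ≤ K := hbd i0
    have h4 : μ i0 * (1/ψ') ≤ K := by linarith [h2 ▸ h1]
    rw [mul_one_div, div_le_iff₀ hψ'0] at h4
    exact h4
  refine ⟨key, ?_⟩
  intro i
  have hbound : ∀ T ∈ (univ : Finset (Fin n)).powersetCard (α-1),
      ∏ j ∈ T, Function.update μ i 0 j ≤ (K * ψ') ^ (α-1) := by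
    intro T hT
    rw [mem_powersetCard] at hT
    calc ∏ j ∈ T, Function.update μ i 0 j ≤ ∏ j ∈ T, (K * ψ') := by
          apply Finset.prod_le_prod
          · intro j _
            rcases eq_or_ne j i with h | h
            · rw [h, Function.update_self]
            · rw [Function.update_of_ne h]; exact le_of_lt (hpos j)
          · intro j _
            rcases eq_or_ne j i with h | h
            · rw [h, Function.update_self]; positivity
            · rw [Function.update_of_ne h]
              exact le_trans (hmax j) key
      _ = (K * ψ') ^ (α-1) := by rw [Finset.prod_const, hT.2]
  calc esym n (α-1) (Function.update μ i 0)
      ≤ ∑ T ∈ (univ : Finset (Fin n)).powersetCard (α-1), (K * ψ') ^ (α-1) :=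
        Finset.sum_le_sum hbound
    _ = (n.choose (α-1) : ℝ) * (K * ψ') ^ (α-1) := by
        rw [Finset.sum_const, Finset.card_powersetCard, card_univ, Fintype.card_fin,
          nsmul_eq_mul]
end
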